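/- arXiv:2306.10936 — 6 statements merged into one kernel-verified Lean document; each statement's English description precedes it below -/
import Mathlib

section
/- Let L > 0 and let u : [0,L] → ℝ³ be smooth with |u'(s)| = 1 for all s, and let N(r) and s_i(r) denote the greedy chord construction of u. Then for every sufficiently large N ∈ ℕ the set {r > 0 : N(r) = N} is nonempty and admits a maximum r_N := max{r > 0 : N(r) = N}; moreover s_N(r_N) = L, that is, the greedy polygonal chain with N chords of length r_N ends exactly at u(L). -/
open Set Filter Topology
open scoped RealInnerProductSpace

noncomputable def greedyS (u : ℝ → EuclideanSpace ℝ (Fin 3)) (L r : ℝ) : ℕ → ℝ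
  | 0 => 0
  | i + 1 => sInf {t : ℝ | t ∈ Icc (greedyS u L r i) L ∧ ‖u t - u (greedyS u L r i)‖ = r}

noncomputable def greedyN (u : ℝ → EuclideanSpace ℝ (Fin 3)) (L r : ℝ) : ℕ :=
  sInf {i : ℕ | ∀ t ∈ Icc (greedyS u L r i) L, ‖u t - u (greedyS u L r i)‖ < r}

/-- the stopping condition at index `i` -/
def gCond (u : ℝ → EuclideanSpace ℝ (Fin 3)) (L r : ℝ) (i : ℕ) : Prop :=
  ∀ t ∈ Icc (greedyS u L r i) L, ‖u t - u (greedyS u L r i)‖ < r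

lemma greedyN_def (u : ℝ → EuclideanSpace ℝ (Fin 3)) (L r : ℝ) :
    greedyN u L r = sInf {i : ℕ | gCond u L r i} := rfl

lemma greedyS_succ (u : ℝ → EuclideanSpace ℝ (Fin 3)) (L r : ℝ) (i : ℕ) :
    greedyS u L r (i + 1) =
      sInf {t : ℝ | t ∈ Icc (greedyS u L r i) L ∧ ‖u t - u (greedyS u L r i)‖ = r} := rfl

variable {u : ℝ → EuclideanSpace ℝ (Fin 3)} {L c r : ℝ}

lemma gS_mem (hL : 0 ≤ L) (r : ℝ) : ∀ i, greedyS u L r i ∈ Icc 0 L := by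
  intro i
  induction i with
  | zero => exact ⟨le_refl 0, hL⟩
  | succ i ih =>
    rw [greedyS_succ]
    by_cases hne : {t : ℝ | t ∈ Icc (greedyS u L r i) L ∧ ‖u t - u (greedyS u L r i)‖ = r}.Nonempty
    · obtain ⟨t₀, ht₀⟩ := hne
      constructor
      · exact le_csInf ⟨t₀, ht₀⟩ (fun t ht => le_trans ih.1 ht.1.1)
      · exact le_trans (csInf_le ⟨greedyS u L r i, fun t ht => ht.1.1⟩ ht₀) ht₀.1.2
    · rw [not_nonempty_iff_eq_empty] at hne
      rw [hne, Real.sInf_empty]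
      exact ⟨le_refl 0, hL⟩

section Greedy

variable (hL : 0 ≤ L)
  (H1 : ContinuousOn u (Icc 0 L))
  (H2 : ∀ s ∈ Icc 0 L, ∀ t ∈ Icc 0 L, ‖u t - u s‖ ≤ |t - s|)
  (H3 : ∀ s a b : ℝ, s ∈ Icc 0 L → b ∈ Icc 0 L → s ≤ a → a ≤ b → b ≤ s + c →
      (b - a) * ((b - s) + (a - s)) / 4 ≤ ‖u b - u s‖ ^ 2 - ‖u a - u s‖ ^ 2)

include hL H1 in
/-- if there is a point of the curve at distance `≥ r`, then the infimum is attained before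
any point at distance `≥ r` -/
lemma gFirstLe (hr : 0 < r) {i : ℕ} {t₀ : ℝ} (ht₀ : t₀ ∈ Icc (greedyS u L r i) L)
    (hφ : r ≤ ‖u t₀ - u (greedyS u L r i)‖) : greedyS u L r (i + 1) ≤ t₀ := by
  set s := greedyS u L r i with hs_def
  have hs : s ∈ Icc 0 L := gS_mem hL r i
  have φcont : ContinuousOn (fun t => ‖u t - u s‖) (Icc s L) :=
    ((H1.mono (Icc_subset_Icc hs.1 le_rfl)).sub continuousOn_const).norm
  have h0 : ‖u s - u s‖ = 0 := by simp
  have hsub : Icc s t₀ ⊆ Icc s L := Icc_subset_Icc le_rfl ht₀.2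
  have hIVT := intermediate_value_Icc ht₀.1 (φcont.mono hsub)
  have hrmem : r ∈ Icc (‖u s - u s‖) (‖u t₀ - u s‖) := by
    rw [h0]; exact ⟨hr.le, hφ⟩
  obtain ⟨t₁, ht₁mem, ht₁⟩ := hIVT hrmem
  have ht₁set : t₁ ∈ {t : ℝ | t ∈ Icc s L ∧ ‖u t - u s‖ = r} :=
    ⟨⟨ht₁mem.1, le_trans ht₁mem.2 ht₀.2⟩, ht₁⟩
  rw [greedyS_succ]
  exact le_trans (csInf_le ⟨s, fun t ht => ht.1.1⟩ ht₁set) ht₁mem.2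

include hL H1 H2 in
lemma gStep (hr : 0 < r) {i : ℕ} (hn : ¬ gCond u L r i) :
    greedyS u L r (i + 1) ∈ Icc (greedyS u L r i) L ∧
    ‖u (greedyS u L r (i + 1)) - u (greedyS u L r i)‖ = r ∧
    greedyS u L r i + r ≤ greedyS u L r (i + 1) := by
  set s := greedyS u L r i with hs_def
  have hs : s ∈ Icc 0 L := gS_mem hL r i
  unfold gCond at hn
  push_neg at hn
  obtain ⟨t₀, ht₀, hφ₀⟩ := hn
  have φcont : ContinuousOn (fun t => ‖u t - u s‖) (Icc s L) :=
    ((H1.mono (Icc_subset_Icc hs.1 le_rfl)).sub continuousOn_const).norm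
  have h0 : ‖u s - u s‖ = 0 := by simp
  have hsub : Icc s t₀ ⊆ Icc s L := Icc_subset_Icc le_rfl ht₀.2
  have hIVT := intermediate_value_Icc ht₀.1 (φcont.mono hsub)
  have hrmem : r ∈ Icc (‖u s - u s‖) (‖u t₀ - u s‖) := by
    rw [h0]; exact ⟨hr.le, hφ₀⟩
  obtain ⟨t₁, ht₁mem, ht₁⟩ := hIVT hrmem
  set Sset := {t : ℝ | t ∈ Icc s L ∧ ‖u t - u s‖ = r} with hSset_def
  have hne : Sset.Nonempty := ⟨t₁, ⟨⟨ht₁mem.1, le_trans ht₁mem.2 ht₀.2⟩, ht₁⟩⟩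
  have hbdd : BddBelow Sset := ⟨s, fun t ht => ht.1.1⟩
  have hclosed : IsClosed Sset := by
    have : Sset = Icc s L ∩ (fun t => ‖u t - u s‖) ⁻¹' {r} := by
      ext t; simp [hSset_def]
    rw [this]
    exact φcont.preimage_isClosed_of_isClosed isClosed_Icc isClosed_singleton
  have hmem : sInf Sset ∈ Sset := hclosed.csInf_mem hne hbdd
  have hSi : greedyS u L r (i + 1) = sInf Sset := greedyS_succ u L r i
  rw [hSi]
  refine ⟨hmem.1, hmem.2, ?_⟩
  have hsub2 : sInf Sset ∈ Icc 0 L := ⟨le_trans hs.1 hmem.1.1, hmem.1.2⟩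
  have := H2 s hs (sInf Sset) hsub2
  rw [hmem.2] at this
  rw [abs_of_nonneg (by linarith [hmem.1.1])] at this
  linarith

include hL H1 H2 in
lemma gChain (hr : 0 < r) : ∀ i : ℕ, (∀ j, j < i → ¬ gCond u L r j) →
    r * i ≤ greedyS u L r i ∧
    ∀ j k : ℕ, j ≤ k → k ≤ i → greedyS u L r j ≤ greedyS u L r k := by
  intro i
  induction i with
  | zero =>
    intro _
    refine ⟨by simp [greedyS], ?_⟩
    intro j k hjk hk
    interval_cases k
    interval_cases j
    exact le_rfl
  | succ i ih =>
    intro h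
    have ih' := ih (fun j hj => h j (Nat.lt_succ_of_lt hj))
    have hstep := gStep hL H1 H2 hr (h i (Nat.lt_succ_self i))
    constructor
    · have : r * (i + 1 : ℕ) = r * i + r := by push_cast; ring
      rw [this]
      linarith [ih'.1, hstep.2.2]
    · intro j k hjk hk
      rcases Nat.lt_succ_iff_lt_or_eq.mp (Nat.lt_succ_of_le hk) with hk' | hk'
      · exact ih'.2 j k hjk (Nat.lt_succ_iff.mp hk')
      · subst hk'
        rcases Nat.lt_succ_iff_lt_or_eq.mp (Nat.lt_succ_of_le hjk) with hj' | hj'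
        · have h1 := ih'.2 j i (Nat.lt_succ_iff.mp hj') le_rfl
          linarith [hstep.2.2]
        · subst hj'; exact le_rfl

end Greedy

section Greedy2

variable (hL : 0 ≤ L)
  (H1 : ContinuousOn u (Icc 0 L))
  (H2 : ∀ s ∈ Icc 0 L, ∀ t ∈ Icc 0 L, ‖u t - u s‖ ≤ |t - s|)
  (H3 : ∀ s a b : ℝ, s ∈ Icc 0 L → b ∈ Icc 0 L → s ≤ a → a ≤ b → b ≤ s + c →
      (b - a) * ((b - s) + (a - s)) / 4 ≤ ‖u b - u s‖ ^ 2 - ‖u a - u s‖ ^ 2)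

include hL H1 H2 in
lemma gTerm (hr : 0 < r) : {i : ℕ | gCond u L r i}.Nonempty := by
  by_contra h
  have hni : ∀ i, ¬ gCond u L r i := fun i hi => h ⟨i, hi⟩
  obtain ⟨n, hn⟩ := exists_nat_gt (L / r)
  have h1 := (gChain hL H1 H2 hr n (fun j _ => hni j)).1
  have h2 := (gS_mem hL r n (u := u)).2
  have : L / r < n := hn
  rw [div_lt_iff₀ hr] at this
  nlinarith

include H3 in
lemma chordLB {s b : ℝ} (hs : s ∈ Icc 0 L) (hb : b ∈ Icc 0 L) (hsb : s ≤ b)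
    (hbc : b ≤ s + c) : (b - s) / 2 ≤ ‖u b - u s‖ := by
  have h := H3 s s b hs hb le_rfl hsb hbc
  have h0 : ‖u s - u s‖ = 0 := by simp
  rw [h0] at h
  nlinarith [norm_nonneg (u b - u s)]

include H3 in
lemma gMonoChord {s a b : ℝ} (hs : s ∈ Icc 0 L) (hb : b ∈ Icc 0 L) (hsa : s ≤ a)
    (hab : a < b) (hbc : b ≤ s + c) : ‖u a - u s‖ < ‖u b - u s‖ := by
  have h := H3 s a b hs hb hsa hab.le hbc
  nlinarith [norm_nonneg (u a - u s), norm_nonneg (u b - u s)]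

include H2 H3 in
lemma invMod (hL' : 0 < L) {p a b d : ℝ} (hp : p ∈ Icc 0 L) (ha : a ∈ Icc 0 L)
    (hb : b ∈ Icc 0 L) (hd : 0 < d) (hpa : p + d ≤ a) (hab : a ≤ b) (hbc : b ≤ p + c) :
    ‖u a - u p‖ + (b - a) * (d / (4 * L)) ≤ ‖u b - u p‖ := by
  set A := ‖u a - u p‖
  set B := ‖u b - u p‖
  have hAB : A ≤ B := by
    rcases eq_or_lt_of_le hab with h | h
    · subst h; exact le_rfl
    · exact (gMonoChord H3 hp hb (by linarith) h hbc).le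
  have hA : A ≤ L := by
    have := H2 p hp a ha
    calc A ≤ |a - p| := this
    _ ≤ L := by rw [abs_of_nonneg (by linarith)]; cases ha; cases hp; linarith
  have hB : B ≤ L := by
    have := H2 p hp b hb
    calc B ≤ |b - p| := this
    _ ≤ L := by rw [abs_of_nonneg (by linarith)]; cases hb; cases hp; linarith
  have hsq := H3 p a b hp hb (by linarith) hab hbc
  have hkey : (b - a) * d ≤ (B - A) * (4 * L) := by
    nlinarith [norm_nonneg (u a - u p), norm_nonneg (u b - u p)]
  have heq : (b - a) * (d / (4 * L)) = ((b - a) * d) / (4 * L) := by ring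
  rw [heq]
  have h4L : (0:ℝ) < 4 * L := by linarith
  have : (b - a) * d / (4 * L) ≤ B - A := by
    rw [div_le_iff₀ h4L]
    linarith
  linarith

include hL H1 H2 H3 in
lemma gStepUB (hr : 0 < r) (h2rc : 2 * r ≤ c) {i : ℕ} (hn : ¬ gCond u L r i) :
    greedyS u L r (i + 1) ≤ greedyS u L r i + 2 * r := by
  set s := greedyS u L r i with hs_def
  have hs : s ∈ Icc 0 L := gS_mem hL r i
  by_cases hcase : s + 2 * r ≤ L
  · have ht₀ : s + 2 * r ∈ Icc s L := ⟨by linarith, hcase⟩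
    have ht₀' : s + 2 * r ∈ Icc 0 L := ⟨by linarith [hs.1], hcase⟩
    have hlb := chordLB H3 hs ht₀' (by linarith) (by linarith)
    have : r ≤ ‖u (s + 2 * r) - u s‖ := by
      have : (s + 2 * r - s) / 2 = r := by ring
      linarith [hlb, this.symm.le]
    exact gFirstLe hL H1 hr ht₀ this
  · push_neg at hcase
    have hstep := gStep hL H1 H2 hr hn
    linarith [hstep.1.2]

include hL H2 H3 in
lemma gStop (hr : 0 < r) (h2rc : 2 * r ≤ c) {m : ℕ} (hm : gCond u L r m) :
    L < greedyS u L r m + 2 * r := by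
  by_contra h
  push_neg at h
  set s := greedyS u L r m with hs_def
  have hs : s ∈ Icc 0 L := gS_mem hL r m
  have ht₀' : s + 2 * r ∈ Icc 0 L := ⟨by linarith [hs.1], h⟩
  have hlb := chordLB H3 hs ht₀' (by linarith) (by linarith)
  have h2 := hm (s + 2 * r) ⟨by linarith, h⟩
  have : (s + 2 * r - s) / 2 = r := by ring
  linarith

include hL H1 H2 H3 in
lemma gChainUB (hr : 0 < r) (h2rc : 2 * r ≤ c) : ∀ i : ℕ, (∀ j, j < i → ¬ gCond u L r j) →
    greedyS u L r i ≤ 2 * r * i := by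
  intro i
  induction i with
  | zero => intro _; simp [greedyS]
  | succ i ih =>
    intro h
    have ih' := ih (fun j hj => h j (Nat.lt_succ_of_lt hj))
    have := gStepUB hL H1 H2 H3 hr h2rc (h i (Nat.lt_succ_self i))
    have hcast : ((i + 1 : ℕ) : ℝ) = (i : ℝ) + 1 := by push_cast; ring
    rw [hcast]
    linarith


set_option maxHeartbeats 2000000 in
/-- for all sufficiently large `N`, the set `{r > 0 : N(r) = N}` is nonempty
and has a maximum `r_N`, and the greedy chain with `N` chords of length `r_N` ends
exactly at `u(L)`, i.e. `s_N(r_N) = L`. -/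
theorem stmt10 (L : ℝ) (hL : 0 < L) (u : ℝ → EuclideanSpace ℝ (Fin 3))
    (hu : ContDiffOn ℝ (⊤ : ℕ∞) u (Icc 0 L))
    (hunit : ∀ s ∈ Icc 0 L, ‖derivWithin u (Icc 0 L) s‖ = 1) :
    ∃ N₀ : ℕ, ∀ N : ℕ, N₀ ≤ N →
      {r : ℝ | 0 < r ∧ greedyN u L r = N}.Nonempty ∧
      ∃ rN : ℝ, IsGreatest {r : ℝ | 0 < r ∧ greedyN u L r = N} rN ∧
        greedyS u L rN N = L := by
  have hL0 : (0:ℝ) ≤ L := hL.le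
  have hUD : UniqueDiffOn ℝ (Icc (0:ℝ) L) := uniqueDiffOn_Icc hL
  set v : ℝ → EuclideanSpace ℝ (Fin 3) := derivWithin u (Icc 0 L) with hv
  have hdiff : DifferentiableOn ℝ u (Icc 0 L) := hu.differentiableOn (by simp)
  have hder : ∀ s ∈ Icc 0 L, HasDerivWithinAt u (v s) (Icc 0 L) s :=
    fun s hs => (hdiff s hs).hasDerivWithinAt
  have H1 : ContinuousOn u (Icc 0 L) := hdiff.continuousOn
  have hvcont : ContinuousOn v (Icc 0 L) := hu.continuousOn_derivWithin hUD (by exact_mod_cast le_top)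
  have hucont : UniformContinuousOn v (Icc 0 L) :=
    isCompact_Icc.uniformContinuousOn_of_continuous hvcont
  rw [Metric.uniformContinuousOn_iff] at hucont
  obtain ⟨δ, hδpos, hδ⟩ := hucont (1/4) (by norm_num)
  set c := min (δ/2) L with hc_def
  have hc : 0 < c := lt_min (by linarith) hL
  have hcL : c ≤ L := min_le_right _ _
  have hcδ : ∀ x ∈ Icc 0 L, ∀ y ∈ Icc 0 L, |x - y| ≤ c → ‖v x - v y‖ ≤ 1/4 := by
    intro x hx y hy hxy
    have h1 : dist x y < δ := by
      rw [Real.dist_eq]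
      calc |x - y| ≤ c := hxy
      _ ≤ δ/2 := min_le_left _ _
      _ < δ := by linarith
    have := hδ x hx y hy h1
    rw [dist_eq_norm] at this
    linarith
  have H2 : ∀ s ∈ Icc 0 L, ∀ t ∈ Icc 0 L, ‖u t - u s‖ ≤ |t - s| := by
    intro s hs t ht
    have := Convex.norm_image_sub_le_of_norm_hasDerivWithin_le hder
      (fun x hx => le_of_eq (hunit x hx)) (convex_Icc 0 L) hs ht
    rwa [one_mul, Real.norm_eq_abs] at this
  have hB1 : ∀ p ∈ Icc 0 L, ∀ q ∈ Icc 0 L, p ≤ q → q - p ≤ c →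
      ‖u q - u p - (q - p) • v q‖ ≤ (q - p)/4 := by
    intro p hp q hq hpq hqc
    have hsub : Icc p q ⊆ Icc 0 L := Icc_subset_Icc hp.1 hq.2
    have hfd : ∀ x ∈ Icc p q, HasDerivWithinAt (fun y => u y - y • v q) (v x - v q) (Icc p q) x := by
      intro x hx
      have h1 : HasDerivWithinAt u (v x) (Icc p q) x := (hder x (hsub hx)).mono hsub
      have h2 : HasDerivWithinAt (fun y : ℝ => y • v q) ((1:ℝ) • v q) (Icc p q) x :=
        (hasDerivWithinAt_id x (Icc p q)).smul_const (v q)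
      rw [one_smul] at h2
      exact h1.sub h2
    have hbound : ∀ x ∈ Icc p q, ‖v x - v q‖ ≤ 1/4 := by
      intro x hx
      refine hcδ x (hsub hx) q hq ?_
      rw [abs_of_nonpos (by linarith [hx.2])]
      linarith [hx.1]
    have := Convex.norm_image_sub_le_of_norm_hasDerivWithin_le hfd hbound (convex_Icc p q)
      (⟨le_rfl, hpq⟩ : p ∈ Icc p q) (⟨hpq, le_rfl⟩ : q ∈ Icc p q)
    have heq : (u q - q • v q) - (u p - p • v q) = u q - u p - (q - p) • v q := by
      rw [sub_smul]; abel
    rw [heq] at this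
    rw [Real.norm_eq_abs, abs_of_nonneg (by linarith)] at this
    linarith
  have H3 : ∀ s a b : ℝ, s ∈ Icc 0 L → b ∈ Icc 0 L → s ≤ a → a ≤ b → b ≤ s + c →
      (b - a) * ((b - s) + (a - s)) / 4 ≤ ‖u b - u s‖ ^ 2 - ‖u a - u s‖ ^ 2 := by
    intro s a b hs hb hsa hab hbc
    have ha : a ∈ Icc 0 L := ⟨le_trans hs.1 hsa, le_trans hab hb.2⟩
    have hva : ‖v a‖ = 1 := hunit a ha
    have hvb : ‖v b‖ = 1 := hunit b hb
    have h1 : ‖u a - u s - (a - s) • v a‖ ≤ (a - s)/4 := hB1 s hs a ha hsa (by linarith)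
    have h1b : ‖u b - u s - (b - s) • v b‖ ≤ (b - s)/4 :=
      hB1 s hs b hb (le_trans hsa hab) (by linarith)
    have h2 : ‖u b - u a - (b - a) • v b‖ ≤ (b - a)/4 := hB1 a ha b hb hab (by linarith)
    have h3 : ‖v b - v a‖ ≤ 1/4 := hcδ b hb a ha (by rw [abs_of_nonneg (by linarith)]; linarith)
    have hA2 : ‖u a - u s‖ ≤ a - s := by
      have := H2 s hs a ha; rwa [abs_of_nonneg (by linarith)] at this
    have hB2 : ‖u b - u s‖ ≤ b - s := by
      have := H2 s hs b hb; rwa [abs_of_nonneg (by linarith)] at this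
    -- inner product estimates
    have F1 : (3/4) * (a - s) ≤ ⟪v a, u a - u s⟫ := by
      have hdecomp : u a - u s = (a - s) • v a + (u a - u s - (a - s) • v a) := by abel
      rw [hdecomp, inner_add_right, real_inner_smul_right, real_inner_self_eq_norm_sq, hva]
      have := abs_real_inner_le_norm (v a) (u a - u s - (a - s) • v a)
      rw [hva, one_mul] at this
      have hlow := neg_le_of_abs_le this
      nlinarith
    have F2 : (a - s)/2 ≤ ⟪v b, u a - u s⟫ := by
      have hdec : ⟪v b, u a - u s⟫ = ⟪v a, u a - u s⟫ + ⟪v b - v a, u a - u s⟫ := by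
        rw [inner_sub_left]; ring
      have := abs_real_inner_le_norm (v b - v a) (u a - u s)
      have hlow := neg_le_of_abs_le this
      rw [hdec]
      nlinarith [norm_nonneg (u a - u s)]
    have F3 : (b - s)/2 ≤ ⟪v b, u b - u s⟫ := by
      have hdecomp : u b - u s = (b - s) • v b + (u b - u s - (b - s) • v b) := by abel
      rw [hdecomp, inner_add_right, real_inner_smul_right, real_inner_self_eq_norm_sq, hvb]
      have := abs_real_inner_le_norm (v b) (u b - u s - (b - s) • v b)
      rw [hvb, one_mul] at this
      have hlow := neg_le_of_abs_le this
      nlinarith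
    set w := (u b - u s) + (u a - u s) with hw
    have F4 : ‖u b - u s‖ ^ 2 - ‖u a - u s‖ ^ 2 = ⟪u b - u a, w⟫ := by
      have : u b - u a = (u b - u s) - (u a - u s) := by abel
      rw [this, hw, inner_sub_left, inner_add_right, inner_add_right,
        real_inner_self_eq_norm_sq, real_inner_self_eq_norm_sq,
        real_inner_comm (u a - u s) (u b - u s)]
      ring
    have F5 : ⟪u b - u a, w⟫ =
        (b - a) * ⟪v b, w⟫ + ⟪u b - u a - (b - a) • v b, w⟫ := by
      rw [← real_inner_smul_left, ← inner_add_left]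
      congr 1
      abel
    have hwnorm : ‖w‖ ≤ (b - s) + (a - s) := by
      calc ‖w‖ ≤ ‖u b - u s‖ + ‖u a - u s‖ := norm_add_le _ _
      _ ≤ (b - s) + (a - s) := by linarith
    have F6 : |⟪u b - u a - (b - a) • v b, w⟫| ≤ (b - a)/4 * ((b - s) + (a - s)) := by
      calc |⟪u b - u a - (b - a) • v b, w⟫| ≤ ‖u b - u a - (b - a) • v b‖ * ‖w‖ :=
        abs_real_inner_le_norm _ _
      _ ≤ (b - a)/4 * ((b - s) + (a - s)) := by
        apply mul_le_mul h2 hwnorm (norm_nonneg _) (by linarith)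
    have F7 : (b - s)/2 + (a - s)/2 ≤ ⟪v b, w⟫ := by
      rw [hw, inner_add_right]
      linarith
    have hlow6 := neg_le_of_abs_le F6
    have hmul : (b - a) * ((b - s) + (a - s)) / 2 ≤ (b - a) * ⟪v b, w⟫ := by
      calc (b - a) * ((b - s) + (a - s)) / 2 = (b - a) * ((b - s)/2 + (a - s)/2) := by ring
      _ ≤ (b - a) * ⟪v b, w⟫ := mul_le_mul_of_nonneg_left F7 (by linarith)
    rw [F4, F5]
    linarith
  -- main argument
  clear hder hvcont hδ hB1 hdiff
  refine ⟨max 1 (Nat.ceil (8 * L / c)), fun N hN => ?_⟩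
  have hN1 : 1 ≤ N := le_trans (le_max_left _ _) hN
  have hN0 : (0:ℝ) < N := by exact_mod_cast hN1
  have hNc : 8 * L / c ≤ (N : ℝ) := by
    have h1 : (Nat.ceil (8 * L / c) : ℝ) ≤ N := by
      exact_mod_cast le_trans (le_max_right _ _) hN
    exact le_trans (Nat.le_ceil _) h1
  have hLN : L / N ≤ c / 8 := by
    rw [div_le_div_iff₀ hN0 (by norm_num : (0:ℝ) < 8)]
    rw [div_le_iff₀ hc] at hNc
    nlinarith
  set T := {r : ℝ | 0 < r ∧ N ≤ greedyN u L r} with hT_def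
  have hrun : ∀ r : ℝ, ∀ j, j < greedyN u L r → ¬ gCond u L r j := by
    intro r j hj
    exact Nat.notMem_of_lt_sInf (by rw [← greedyN_def]; exact hj)
  have hTub : ∀ r ∈ T, r ≤ L / N := by
    intro r hr
    obtain ⟨hr0, hrN⟩ := hr
    have hch := (gChain hL0 H1 H2 hr0 (greedyN u L r) (hrun r)).1
    have hmul : r * (N : ℝ) ≤ r * (greedyN u L r : ℝ) :=
      mul_le_mul_of_nonneg_left (by exact_mod_cast hrN) hr0.le
    have hSle := (gS_mem hL0 r (greedyN u L r) (u := u)).2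
    rw [le_div_iff₀ hN0]
    linarith
  have hTsmall : ∀ r ∈ T, 2 * r ≤ c / 4 := by
    intro r hr
    have := hTub r hr
    linarith
  have hr₁pos : (0:ℝ) < L / (2 * (N + 1)) := by positivity
  have hr₁c : 2 * (L / (2 * (N + 1))) ≤ c := by
    have h1 : 2 * (L / (2 * (N + 1))) = L / (N + 1) := by field_simp
    rw [h1]
    have h2 : L / ((N:ℝ) + 1) ≤ L / N := by
      apply div_le_div_of_nonneg_left hL.le hN0
      linarith
    linarith
  have hr₁T : L / (2 * (N + 1)) ∈ T := by
    refine ⟨hr₁pos, ?_⟩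
    set r₁ := L / (2 * (N + 1)) with hr₁_def
    set m := greedyN u L r₁ with hm_def
    have hcond : gCond u L r₁ m := by
      rw [hm_def, greedyN_def]
      exact Nat.sInf_mem (gTerm hL0 H1 H2 hr₁pos)
    have hstop := gStop hL0 H2 H3 hr₁pos hr₁c hcond
    have hub := gChainUB hL0 H1 H2 H3 hr₁pos hr₁c m (hrun r₁)
    -- L < 2 r₁ (m+1)
    have hL2 : L < 2 * r₁ * (m + 1) := by push_cast; nlinarith
    have h2r : 2 * r₁ * ((N:ℝ) + 1) = L := by rw [hr₁_def]; field_simp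
    have : ((N:ℝ) + 1) < ((m:ℝ) + 1) := by nlinarith
    have : (N:ℝ) < (m:ℝ) + 1 := by linarith
    exact_mod_cast Nat.lt_succ_iff.mp (by exact_mod_cast this)
  have hTbdd : BddAbove T := ⟨L / N, fun r hr => hTub r hr⟩
  have hTne : T.Nonempty := ⟨_, hr₁T⟩
  set ρ := sSup T with hρ_def
  have hρub : ρ ≤ L / N := csSup_le hTne hTub
  have hρpos : 0 < ρ := lt_of_lt_of_le hr₁pos (le_csSup hTbdd hr₁T)
  have hρc : 2 * ρ ≤ c / 4 := by linarith
  -- Claim A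
  have hρrun : ∀ j, j < N → ¬ gCond u L ρ j := by
    obtain ⟨w, hwmono, hwtend, hwT⟩ := exists_seq_tendsto_sSup hTne hTbdd
    have hwrun : ∀ n, ∀ j, j < N → ¬ gCond u L (w n) j := by
      intro n j hj
      exact hrun (w n) j (lt_of_lt_of_le hj (hwT n).2)
    have hwpos : ∀ n, 0 < w n := fun n => (hwT n).1
    have hw2c : ∀ n, 2 * w n ≤ c := fun n => le_trans (hTsmall _ (hwT n)) (by linarith)
    set x : ℕ → (ℕ → ℝ) := fun n i => greedyS u L (w n) i with hx_def
    have hxmem : ∀ n, x n ∈ Set.pi univ (fun _ : ℕ => Icc (0:ℝ) L) := by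
      intro n i _
      exact gS_mem hL0 (w n) i
    obtain ⟨σ, hσmem, ψ, hψmono, hψtend⟩ :=
      (isCompact_univ_pi (fun _ : ℕ => isCompact_Icc)).tendsto_subseq hxmem
    have hσI : ∀ i, σ i ∈ Icc (0:ℝ) L := fun i => hσmem i (mem_univ i)
    have hcoord : ∀ i, Tendsto (fun n => greedyS u L (w (ψ n)) i) atTop (𝓝 (σ i)) := by
      intro i
      exact (tendsto_pi_nhds.mp hψtend) i
    have hwψ : Tendsto (fun n => w (ψ n)) atTop (𝓝 ρ) := hwtend.comp hψmono.tendsto_atTop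
    have huσ : ∀ i, Tendsto (fun n => u (greedyS u L (w (ψ n)) i)) atTop (𝓝 (u (σ i))) := by
      intro i
      have hin : Tendsto (fun n => greedyS u L (w (ψ n)) i) atTop (𝓝[Icc (0:ℝ) L] (σ i)) := by
        rw [tendsto_nhdsWithin_iff]
        exact ⟨hcoord i, Eventually.of_forall (fun n => gS_mem hL0 (w (ψ n)) i)⟩
      exact ((H1 (σ i) (hσI i)).tendsto).comp hin
    have hlim : ∀ j, j < N →
        ρ ≤ σ (j+1) - σ j ∧ σ (j+1) - σ j ≤ 2*ρ ∧ ‖u (σ (j+1)) - u (σ j)‖ = ρ := by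
      intro j hj
      have h1 : ∀ n, greedyS u L (w (ψ n)) j + w (ψ n) ≤ greedyS u L (w (ψ n)) (j+1) :=
        fun n => (gStep hL0 H1 H2 (hwpos _) (hwrun (ψ n) j hj)).2.2
      have h2 : ∀ n, greedyS u L (w (ψ n)) (j+1) ≤ greedyS u L (w (ψ n)) j + 2 * w (ψ n) :=
        fun n => gStepUB hL0 H1 H2 H3 (hwpos _) (hw2c _) (hwrun (ψ n) j hj)
      have hdiff := (hcoord (j+1)).sub (hcoord j)
      refine ⟨?_, ?_, ?_⟩
      · exact le_of_tendsto_of_tendsto' hwψ hdiff (fun n => by linarith [h1 n])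
      · exact le_of_tendsto_of_tendsto' hdiff (hwψ.const_mul 2) (fun n => by linarith [h2 n])
      · have hnorm : Tendsto (fun n => ‖u (greedyS u L (w (ψ n)) (j+1)) - u (greedyS u L (w (ψ n)) j)‖)
            atTop (𝓝 (‖u (σ (j+1)) - u (σ j)‖)) := ((huσ (j+1)).sub (huσ j)).norm
        have heqf : (fun n => ‖u (greedyS u L (w (ψ n)) (j+1)) - u (greedyS u L (w (ψ n)) j)‖)
            = fun n => w (ψ n) := by
          funext n
          exact (gStep hL0 H1 H2 (hwpos _) (hwrun (ψ n) j hj)).2.1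
        rw [heqf] at hnorm
        exact tendsto_nhds_unique hnorm hwψ
    have hσ0 : σ 0 = 0 := by
      have h0 : (fun n => greedyS u L (w (ψ n)) 0) = fun _ => (0:ℝ) := rfl
      have := hcoord 0
      rw [h0] at this
      exact tendsto_nhds_unique this tendsto_const_nhds
    have hkey : ∀ i, i ≤ N → greedyS u L ρ i = σ i ∧ ∀ j, j < i → ¬ gCond u L ρ j := by
      intro i
      induction i with
      | zero => exact fun _ => ⟨hσ0.symm, fun j hj => absurd hj (Nat.not_lt_zero j)⟩
      | succ i ih =>
        intro hi
        obtain ⟨hSi, hrunP⟩ := ih (le_trans (Nat.le_succ i) hi)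
        have hiN : i < N := hi
        obtain ⟨hstep_lo, hstep_hi, hchord⟩ := hlim i hiN
        have hnc : ¬ gCond u L ρ i := by
          intro hcond
          have hmem : σ (i+1) ∈ Icc (greedyS u L ρ i) L := by
            rw [hSi]
            exact ⟨by linarith, (hσI (i+1)).2⟩
          have := hcond (σ (i+1)) hmem
          rw [hSi, hchord] at this
          exact lt_irrefl _ this
        have hnrun : ∀ j, j < i+1 → ¬ gCond u L ρ j := fun j hj =>
          (Nat.lt_succ_iff_lt_or_eq.mp hj).elim (hrunP j) (fun h => h ▸ hnc)
        have hstep := gStep hL0 H1 H2 hρpos hnc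
        rw [hSi] at hstep
        have hle : greedyS u L ρ (i+1) ≤ σ (i+1) := by
          rw [greedyS_succ, hSi]
          apply csInf_le ⟨σ i, fun t ht => ht.1.1⟩
          exact ⟨⟨by linarith, (hσI (i+1)).2⟩, hchord⟩
        rcases eq_or_lt_of_le hle with heq | hlt
        · exact ⟨heq, hnrun⟩
        · exfalso
          have hmono := gMonoChord H3 (s := σ i) (a := greedyS u L ρ (i+1)) (b := σ (i+1))
            (hσI i) (hσI (i+1)) hstep.1.1 hlt (by linarith)
          rw [hstep.2.1, hchord] at hmono
          exact lt_irrefl _ hmono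
    exact fun j hj => (hkey N le_rfl).2 j hj
  have hρT : ρ ∈ T := by
    refine ⟨hρpos, ?_⟩
    by_contra h
    push_neg at h
    have hmem : greedyN u L ρ ∈ {i : ℕ | gCond u L ρ i} := by
      rw [greedyN_def]
      exact Nat.sInf_mem (gTerm hL0 H1 H2 hρpos)
    exact hρrun _ h hmem
  -- Claim B
  have hSN : greedyS u L ρ N = L := by
    by_contra hne
    have hsI : ∀ i, greedyS u L ρ i ∈ Icc (0:ℝ) L := fun i => gS_mem hL0 ρ i
    set s : ℕ → ℝ := greedyS u L ρ with hs_def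
    have hstep : ∀ j, j < N →
        (s j + ρ ≤ s (j+1) ∧ ‖u (s (j+1)) - u (s j)‖ = ρ ∧ s (j+1) ≤ s j + 2*ρ) := by
      intro j hj
      have h1 := gStep hL0 H1 H2 hρpos (hρrun j hj)
      have h2 := gStepUB hL0 H1 H2 H3 hρpos (by linarith) (hρrun j hj)
      exact ⟨h1.2.2, h1.2.1, h2⟩
    have hmonoN : ∀ j, j ≤ N → s j ≤ s N :=
      fun j hj => (gChain hL0 H1 H2 hρpos N hρrun).2 j N hj le_rfl
    have hsNlt : s N < L := lt_of_le_of_ne (hsI N).2 hne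
    set gap := L - s N with hgap_def
    have hgap : 0 < gap := by simp only [hgap_def]; linarith
    have hρL : ρ ≤ L := le_trans hρub (div_le_self hL0 (by exact_mod_cast hN1))
    set κ := ρ / (8 * L) with hκdef
    have hκ : 0 < κ := by positivity
    have hκ1 : κ ≤ 1 := by
      rw [hκdef, div_le_one (by linarith)]
      linarith
    set m₀ := min (min gap (ρ/2)) (c/4) with hm₀def
    have hm₀pos : 0 < m₀ := lt_min (lt_min hgap (by linarith)) (by linarith)
    have hm₀gap : m₀ ≤ gap := le_trans (min_le_left _ _) (min_le_left _ _)
    have hm₀ρ : m₀ ≤ ρ/2 := le_trans (min_le_left _ _) (min_le_right _ _)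
    have hm₀c : m₀ ≤ c/4 := min_le_right _ _
    have h2κ : 1 ≤ 2/κ := by
      rw [le_div_iff₀ hκ]
      linarith
    set C := (2/κ)^N with hCdef
    have hC1 : 1 ≤ C := one_le_pow₀ h2κ
    have hC0 : 0 < C := by linarith
    set ε := m₀ / (2*C) with hεdef
    have hεpos : 0 < ε := by positivity
    have hεC : ε * C = m₀ / 2 := by
      rw [hεdef]
      field_simp
    set e : ℕ → ℝ := fun i => Nat.rec (0:ℝ) (fun _ x => (x + ε)/κ) i with he_def
    have he0 : e 0 = 0 := rfl
    have hesucc : ∀ i, e (i+1) = (e i + ε)/κ := fun i => rfl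
    have hepos : ∀ i, 0 ≤ e i := by
      intro i
      induction i with
      | zero => exact le_of_eq he0.symm
      | succ i ih =>
        rw [hesucc]
        exact div_nonneg (by linarith) hκ.le
    have hebound : ∀ i, e i ≤ ε * (2/κ)^i := by
      intro i
      induction i with
      | zero => rw [he0, pow_zero, mul_one]; exact hεpos.le
      | succ i ih =>
        rw [hesucc, pow_succ, div_le_iff₀ hκ]
        have h1 : 1 ≤ (2/κ)^i := one_le_pow₀ h2κ
        have h2 : ε ≤ ε * (2/κ)^i := le_mul_of_one_le_right hεpos.le h1
        have h3 : ε * ((2/κ)^i * (2/κ)) * κ = 2 * (ε * (2/κ)^i) := by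
          field_simp
        rw [h3]
        linarith
    have heN : ∀ i, i ≤ N → e i ≤ m₀/2 := by
      intro i hi
      have h1 := hebound i
      have h2 : (2/κ)^i ≤ C := by
        rw [hCdef]
        exact pow_le_pow_right₀ h2κ hi
      have h3 : ε * (2/κ)^i ≤ ε * C := mul_le_mul_of_nonneg_left h2 hεpos.le
      linarith [hεC]
    set r' := ρ + ε with hr'def
    have hr'pos : 0 < r' := by simp only [hr'def]; linarith
    have hκe : ∀ i, e (i+1) * κ = e i + ε := by
      intro i
      rw [hesucc]
      field_simp
    have hQ : ∀ i, i ≤ N →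
        (∀ j, j < i → ¬ gCond u L r' j) ∧ |greedyS u L r' i - s i| ≤ e i := by
      intro i
      induction i with
      | zero =>
        intro _
        refine ⟨fun j hj => absurd hj (Nat.not_lt_zero j), ?_⟩
        have h1 : greedyS u L r' 0 = 0 := rfl
        have h2 : s 0 = 0 := rfl
        rw [h1, h2, he0]
        simp
      | succ i ih =>
        intro hi
        obtain ⟨hrunr, herr⟩ := ih (le_trans (Nat.le_succ i) hi)
        have hiN : i < N := hi
        obtain ⟨hlo, hchord, hhi⟩ := hstep i hiN
        have hei := heN i (le_of_lt hiN)
        have hei1 := heN (i+1) hi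
        have hep1 := hepos (i+1)
        have hep := hepos i
        have hSrI : greedyS u L r' i ∈ Icc (0:ℝ) L := gS_mem hL0 r' i
        have habs1 : greedyS u L r' i - s i ≤ e i := le_trans (le_abs_self _) herr
        have herr' : |s i - greedyS u L r' i| ≤ e i := by
          rw [abs_sub_comm]; exact herr
        have habs2 : s i - greedyS u L r' i ≤ e i := le_trans (le_abs_self _) herr'
        set tst := s (i+1) + e (i+1) with htstdef
        have htstL : tst ≤ L := by
          have := hmonoN (i+1) hi
          simp only [htstdef]
          linarith [hm₀gap]
        have htstI : tst ∈ Icc (0:ℝ) L := ⟨by linarith [(hsI (i+1)).1], htstL⟩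
        have hinv1 := invMod H2 H3 hL (hsI i) (hsI (i+1)) htstI
          (by linarith : (0:ℝ) < ρ/2) (by linarith : s i + ρ/2 ≤ s (i+1))
          (by linarith : s (i+1) ≤ tst)
          (by simp only [htstdef]; linarith [hρc, hm₀c] : tst ≤ s i + c)
        have hκeq : (ρ/2)/(4*L) = κ := by
          rw [hκdef, div_div]
          congr 1
          ring
        rw [hκeq, hchord] at hinv1
        have hteq : (tst - s (i+1)) * κ = e i + ε := by
          have : tst - s (i+1) = e (i+1) := by simp only [htstdef]; ring
          rw [this]
          exact hκe i
        rw [hteq] at hinv1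
        -- shift base point
        have hbase : ‖u (greedyS u L r' i) - u (s i)‖ ≤ e i := by
          have h1 := H2 (s i) (hsI i) (greedyS u L r' i) hSrI
          have h2 : |greedyS u L r' i - s i| ≤ e i := herr
          linarith
        have hshift : ‖u tst - u (s i)‖ - e i ≤ ‖u tst - u (greedyS u L r' i)‖ := by
          have htri : ‖u tst - u (s i)‖ ≤ ‖u tst - u (greedyS u L r' i)‖ + ‖u (greedyS u L r' i) - u (s i)‖ := by
            have heq2 : u tst - u (s i) = (u tst - u (greedyS u L r' i)) + (u (greedyS u L r' i) - u (s i)) := by abel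
            rw [heq2]
            exact norm_add_le _ _
          linarith
        have hφr : r' ≤ ‖u tst - u (greedyS u L r' i)‖ := by
          simp only [hr'def]
          linarith
        have htstSr : tst ∈ Icc (greedyS u L r' i) L := by
          refine ⟨?_, htstL⟩
          simp only [htstdef]
          linarith
        have hnc : ¬ gCond u L r' i := by
          intro hcond
          exact absurd (hcond tst htstSr) (not_lt.mpr hφr)
        have hnrun : ∀ j, j < i+1 → ¬ gCond u L r' j := fun j hj =>
          (Nat.lt_succ_iff_lt_or_eq.mp hj).elim (hrunr j) (fun h => h ▸ hnc)
        have hub : greedyS u L r' (i+1) ≤ tst := gFirstLe hL0 H1 hr'pos htstSr hφr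
        have hstepr := gStep hL0 H1 H2 hr'pos hnc
        have hSr1I : greedyS u L r' (i+1) ∈ Icc (0:ℝ) L := gS_mem hL0 r' (i+1)
        have hlb : s (i+1) - e (i+1) ≤ greedyS u L r' (i+1) := by
          by_contra hcon
          push_neg at hcon
          have hchordr := hstepr.2.1
          by_cases hcase : s i + ρ/2 ≤ greedyS u L r' (i+1)
          · have hinv2 := invMod H2 H3 hL (hsI i) hSr1I (hsI (i+1))
              (by linarith : (0:ℝ) < ρ/2) hcase
              (by linarith : greedyS u L r' (i+1) ≤ s (i+1))
              (by linarith [hρc] : s (i+1) ≤ s i + c)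
            rw [hκeq, hchord] at hinv2
            have hsh2 : r' - e i ≤ ‖u (greedyS u L r' (i+1)) - u (s i)‖ := by
              have htri : ‖u (greedyS u L r' (i+1)) - u (greedyS u L r' i)‖ ≤
                  ‖u (greedyS u L r' (i+1)) - u (s i)‖ + ‖u (s i) - u (greedyS u L r' i)‖ := by
                have heq2 : u (greedyS u L r' (i+1)) - u (greedyS u L r' i) =
                    (u (greedyS u L r' (i+1)) - u (s i)) + (u (s i) - u (greedyS u L r' i)) := by abel
                rw [heq2]
                exact norm_add_le _ _
              have h1 := H2 (greedyS u L r' i) hSrI (s i) (hsI i)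
              have h2 : |s i - greedyS u L r' i| ≤ e i := by rw [abs_sub_comm]; exact herr
              rw [hchordr] at htri
              linarith
            have h5 : (s (i+1) - greedyS u L r' (i+1)) * κ ≤ e i - ε := by
              simp only [hr'def] at hsh2
              linarith
            have h6 : s (i+1) - greedyS u L r' (i+1) ≤ (e i - ε)/κ := (le_div_iff₀ hκ).mpr h5
            have h7 : (e i - ε)/κ ≤ (e i + ε)/κ :=
              (div_le_div_iff_of_pos_right hκ).mpr (by linarith)
            rw [← hesucc] at h7
            linarith
          · push_neg at hcase
            have h8 := hstepr.2.2
            simp only [hr'def] at h8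
            linarith
        refine ⟨hnrun, abs_le.mpr ⟨by linarith, by linarith⟩⟩
    have hr'T : r' ∈ T := by
      refine ⟨hr'pos, ?_⟩
      by_contra h
      push_neg at h
      have hmem : greedyN u L r' ∈ {i : ℕ | gCond u L r' i} := by
        rw [greedyN_def]
        exact Nat.sInf_mem (gTerm hL0 H1 H2 hr'pos)
      exact (hQ N le_rfl).1 _ h hmem
    have hle := le_csSup hTbdd hr'T
    simp only [hr'def] at hle
    linarith
  have hcondN : gCond u L ρ N := by
    intro t ht
    rw [hSN] at ht
    have : t = L := le_antisymm ht.2 ht.1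
    rw [this, hSN]
    simpa using hρpos
  have hgN : greedyN u L ρ = N := by
    apply le_antisymm
    · rw [greedyN_def]; exact Nat.sInf_le hcondN
    · exact hρT.2
  refine ⟨⟨ρ, hρpos, hgN⟩, ρ, ⟨⟨hρpos, hgN⟩, ?_⟩, hSN⟩
  intro r hr
  exact le_csSup hTbdd ⟨hr.1, hr.2.ge⟩
end Greedy2
end

section
/- Let x₋₁, x₀, x₁ ∈ ℝ³ with r₀ := |x₀ − x₋₁| > 0 and r₁ := |x₁ − x₀| > 0, set T := (r₀ + r₁)/2, e₀ := (x₀−x₋₁)/r₀ and e₁ := (x₁−x₀)/r₁, and let S : [0,T] → ℝ³ be the unique polynomial of degree at most 3 with S(0) = (x₋₁+x₀)/2, S(T) = (x₀+x₁)/2, S'(0) = e₀ and S'(T) = e₁. Then ∫₀^T |S''(τ)|² dτ = (1 − e₀·e₁)·(r₀³ + r₁³)/T⁴. -/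
open Set
open scoped RealInnerProductSpace

theorem integ_quad' (a b c T : ℝ) :
    ∫ τ in (0:ℝ)..T, (a*τ^2 + b*τ + c) = a*T^3/3 + b*T^2/2 + c*T := by
  rw [intervalIntegral.integral_add, intervalIntegral.integral_add]
  · rw [intervalIntegral.integral_const_mul, intervalIntegral.integral_const_mul,
      integral_pow, integral_id, intervalIntegral.integral_const]
    push_cast; rw [smul_eq_mul]; ring
  all_goals apply Continuous.intervalIntegrable (by fun_prop)

theorem cubic_hasDerivAt (A B C D : EuclideanSpace ℝ (Fin 3)) (τ : ℝ) :
    HasDerivAt (fun t : ℝ => t ^ 3 • A + t ^ 2 • B + t • C + D)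
      ((3 * τ ^ 2) • A + (2 * τ) • B + C) τ := by
  have h1 := (hasDerivAt_pow 3 τ).smul_const A
  have h2 := (hasDerivAt_pow 2 τ).smul_const B
  have h3 := (hasDerivAt_id τ).smul_const C
  have h := ((h1.add h2).add h3).add_const D
  refine h.congr_deriv ?_
  push_cast
  module

theorem quadratic_hasDerivAt (A B C : EuclideanSpace ℝ (Fin 3)) (τ : ℝ) :
    HasDerivAt (fun t : ℝ => (3 * t ^ 2) • A + (2 * t) • B + C)
      ((6 * τ) • A + (2:ℝ) • B) τ := by
  have h1 := ((hasDerivAt_pow 2 τ).const_mul 3).smul_const A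
  have h2 := ((hasDerivAt_id τ).const_mul 2).smul_const B
  have h := (h1.add h2).add_const C
  refine h.congr_deriv ?_
  push_cast
  module

/-- the bending energy of the Hermite cubic interpolating a triple of points:
`∫₀^T |S''|² = (1 − e₀·e₁)·(r₀³ + r₁³)/T⁴` where `T = (r₀+r₁)/2` and `e₀, e₁` are the unit
edge vectors (note `1 − e₀·e₁ = 2 sin²(φ/2)` for the angle `φ` between the edges). -/
theorem stmt13 (xm x0 x1 : EuclideanSpace ℝ (Fin 3)) (r₀ r₁ : ℝ)
    (hr0 : 0 < r₀) (hr1 : 0 < r₁)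
    (h0 : ‖x0 - xm‖ = r₀) (h1 : ‖x1 - x0‖ = r₁)
    (S : ℝ → EuclideanSpace ℝ (Fin 3))
    (hpoly : ∃ A B C D : EuclideanSpace ℝ (Fin 3),
      ∀ τ : ℝ, S τ = τ ^ 3 • A + τ ^ 2 • B + τ • C + D)
    (hS0 : S 0 = (2:ℝ)⁻¹ • (xm + x0))
    (hST : S ((r₀ + r₁) / 2) = (2:ℝ)⁻¹ • (x0 + x1))
    (hS'0 : deriv S 0 = r₀⁻¹ • (x0 - xm))
    (hS'T : deriv S ((r₀ + r₁) / 2) = r₁⁻¹ • (x1 - x0)) :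
    ∫ τ in (0:ℝ)..((r₀ + r₁) / 2), ‖deriv (deriv S) τ‖ ^ 2 =
      (1 - ⟪r₀⁻¹ • (x0 - xm), r₁⁻¹ • (x1 - x0)⟫) * (r₀ ^ 3 + r₁ ^ 3)
        / ((r₀ + r₁) / 2) ^ 4 := by
  obtain ⟨A, B, C, D, hS⟩ := hpoly
  have hr0' : r₀ ≠ 0 := ne_of_gt hr0
  have hr1' : r₁ ≠ 0 := ne_of_gt hr1
  have hT : (0:ℝ) < (r₀ + r₁) / 2 := by linarith
  have hT' : ((r₀ + r₁) / 2 : ℝ) ≠ 0 := ne_of_gt hT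
  set e0 : EuclideanSpace ℝ (Fin 3) := r₀⁻¹ • (x0 - xm) with he0def
  set e1 : EuclideanSpace ℝ (Fin 3) := r₁⁻¹ • (x1 - x0) with he1def
  have hSfun : S = fun t : ℝ => t ^ 3 • A + t ^ 2 • B + t • C + D := funext hS
  have hd1 : deriv S = fun τ : ℝ => (3 * τ ^ 2) • A + (2 * τ) • B + C := by
    rw [hSfun]; exact funext fun τ => (cubic_hasDerivAt A B C D τ).deriv
  have hd2 : deriv (deriv S) = fun τ : ℝ => (6 * τ) • A + (2:ℝ) • B := by
    rw [hd1]; exact funext fun τ => (quadratic_hasDerivAt A B C τ).deriv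
  -- the constraints
  have hD : D = (2:ℝ)⁻¹ • (xm + x0) := by
    rw [hSfun] at hS0; simpa using hS0
  have hC : C = e0 := by
    rw [hd1] at hS'0; simpa using hS'0
  have heq3 : ((r₀+r₁)/2)^3 • A + ((r₀+r₁)/2)^2 • B + ((r₀+r₁)/2) • C + D
      = (2:ℝ)⁻¹ • (x0 + x1) := by
    rw [hSfun] at hST; simpa using hST
  have heq4 : (3*((r₀+r₁)/2)^2) • A + (2*((r₀+r₁)/2)) • B + C = e1 := by
    rw [hd1] at hS'T; simpa using hS'T
  have he0 : x0 - xm = r₀ • e0 := by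
    rw [he0def, smul_smul, mul_inv_cancel₀ hr0', one_smul]
  have he1 : x1 - x0 = r₁ • e1 := by
    rw [he1def, smul_smul, mul_inv_cancel₀ hr1', one_smul]
  -- solve for A and B
  have hAeq : ((r₀+r₁)/2)^3 • A = ((r₁ - r₀)/2) • (e0 - e1) := by
    linear_combination (norm := module) ((r₀+r₁)/2 : ℝ) • heq4 - (2:ℝ) • heq3 +
      ((r₀+r₁)/2 : ℝ) • hC + (2:ℝ) • hD - he0 - he1
  have hBeq : ((r₀+r₁)/2)^2 • B = ((r₀ - 2*r₁)/2) • (e0 - e1) := by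
    linear_combination (norm := module) (3:ℝ) • heq3 - ((r₀+r₁)/2 : ℝ) • heq4 -
      (2*((r₀+r₁)/2) : ℝ) • hC - (3:ℝ) • hD + (3/2 : ℝ) • he0 + (3/2 : ℝ) • he1
  have hT3 : (((r₀+r₁)/2)^3 : ℝ) ≠ 0 := pow_ne_zero _ hT'
  have hT2 : (((r₀+r₁)/2)^2 : ℝ) ≠ 0 := pow_ne_zero _ hT'
  have hA : A = (((r₁ - r₀)/2) / ((r₀+r₁)/2)^3) • (e0 - e1) := by
    rw [div_eq_inv_mul, ← smul_smul, ← hAeq, inv_smul_smul₀ hT3]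
  have hB : B = (((r₀ - 2*r₁)/2) / ((r₀+r₁)/2)^2) • (e0 - e1) := by
    rw [div_eq_inv_mul, ← smul_smul, ← hBeq, inv_smul_smul₀ hT2]
  -- norms of unit vectors
  have hne0 : ⟪e0, e0⟫ = 1 := by
    rw [real_inner_self_eq_norm_sq, he0def, norm_smul]
    rw [h0, Real.norm_eq_abs, abs_inv, abs_of_pos hr0, inv_mul_cancel₀ hr0', one_pow]
  have hne1 : ⟪e1, e1⟫ = 1 := by
    rw [real_inner_self_eq_norm_sq, he1def, norm_smul]
    rw [h1, Real.norm_eq_abs, abs_inv, abs_of_pos hr1, inv_mul_cancel₀ hr1', one_pow]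
  have hnd : ⟪e0 - e1, e0 - e1⟫ = 2 - 2 * ⟪e0, e1⟫ := by
    rw [real_inner_sub_sub_self, hne0, hne1]; ring
  -- inner products of A and B
  set kA : ℝ := ((r₁ - r₀)/2) / ((r₀+r₁)/2)^3 with hkA
  set kB : ℝ := ((r₀ - 2*r₁)/2) / ((r₀+r₁)/2)^2 with hkB
  have hiAA : ⟪A, A⟫ = kA * kA * (2 - 2 * ⟪e0, e1⟫) := by
    rw [hA, real_inner_smul_left, real_inner_smul_right, hnd]; ring
  have hiAB : ⟪A, B⟫ = kA * kB * (2 - 2 * ⟪e0, e1⟫) := by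
    rw [hA, hB, real_inner_smul_left, real_inner_smul_right, hnd]; ring
  have hiBB : ⟪B, B⟫ = kB * kB * (2 - 2 * ⟪e0, e1⟫) := by
    rw [hB, real_inner_smul_left, real_inner_smul_right, hnd]; ring
  -- the integrand
  have key : ∀ τ : ℝ, ‖deriv (deriv S) τ‖ ^ 2
      = (36 * ⟪A, A⟫) * τ^2 + (24 * ⟪A, B⟫) * τ + 4 * ⟪B, B⟫ := by
    intro τ
    rw [hd2, ← real_inner_self_eq_norm_sq, real_inner_add_add_self,
      real_inner_smul_left, real_inner_smul_right, real_inner_smul_left,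
      real_inner_smul_right, real_inner_smul_left, real_inner_smul_right]
    ring
  rw [intervalIntegral.integral_congr (g := fun τ : ℝ =>
      (36 * ⟪A, A⟫) * τ^2 + (24 * ⟪A, B⟫) * τ + 4 * ⟪B, B⟫) (fun τ _ => key τ)]
  rw [integ_quad', hiAA, hiAB, hiBB, hkA, hkB]
  have h30 : (30:ℝ) ≠ 0 := by norm_num
  field_simp
  ring
end

section
/- Let x₋₁, x₀, x₁ ∈ ℝ³ with r₀ := |x₀ − x₋₁| > 0 and r₁ := |x₁ − x₀| > 0, set T := (r₀+r₁)/2, e₀ := (x₀−x₋₁)/r₀, e₁ := (x₁−x₀)/r₁, and define A, B ∈ ℝ³ by A·T³ = (−1/2 + r₀/(2r₁))(x₁−x₀) + (−1/2 + r₁/(2r₀))(x₀−x₋₁) and B·T² = (1 − r₀/(2r₁))(x₁−x₀) + (1/2 − r₁/r₀)(x₀−x₋₁) (these are the cubic and quadratic coefficients of the Hermite cubic of the triple). Then |A|²T⁶ = ((1 − e₀·e₁)/2)·(r₁−r₀)², (A·B)·T⁵ = −((1 − e₀·e₁)/2)·(2r₁−r₀)(r₁−r₀), and |B|²T⁴ =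 ((1 − e₀·e₁)/2)·(2r₁−r₀)². -/
open Set
open scoped RealInnerProductSpace

/-- the scalar products of the cubic and quadratic coefficients `A`, `B` of
the Hermite cubic of a triple of points, in terms of `sin²(φ/2) = (1 − e₀·e₁)/2` and the
edge lengths `r₀, r₁`, where `T = (r₀+r₁)/2`. -/
theorem stmt14 (xm x0 x1 : EuclideanSpace ℝ (Fin 3)) (r₀ r₁ : ℝ)
    (hr0 : 0 < r₀) (hr1 : 0 < r₁)
    (h0 : ‖x0 - xm‖ = r₀) (h1 : ‖x1 - x0‖ = r₁)
    (A B : EuclideanSpace ℝ (Fin 3))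
    (hA : ((r₀ + r₁) / 2) ^ 3 • A =
      (-(1:ℝ) / 2 + r₀ / (2 * r₁)) • (x1 - x0) + (-(1:ℝ) / 2 + r₁ / (2 * r₀)) • (x0 - xm))
    (hB : ((r₀ + r₁) / 2) ^ 2 • B =
      (1 - r₀ / (2 * r₁)) • (x1 - x0) + ((1:ℝ) / 2 - r₁ / r₀) • (x0 - xm)) :
    ‖A‖ ^ 2 * ((r₀ + r₁) / 2) ^ 6 =
      ((1 - ⟪r₀⁻¹ • (x0 - xm), r₁⁻¹ • (x1 - x0)⟫) / 2) * (r₁ - r₀) ^ 2 ∧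
    ⟪A, B⟫ * ((r₀ + r₁) / 2) ^ 5 =
      -(((1 - ⟪r₀⁻¹ • (x0 - xm), r₁⁻¹ • (x1 - x0)⟫) / 2) * ((2 * r₁ - r₀) * (r₁ - r₀))) ∧
    ‖B‖ ^ 2 * ((r₀ + r₁) / 2) ^ 4 =
      ((1 - ⟪r₀⁻¹ • (x0 - xm), r₁⁻¹ • (x1 - x0)⟫) / 2) * (2 * r₁ - r₀) ^ 2 := by
  have hr0' : r₀ ≠ 0 := hr0.ne'
  have hr1' : r₁ ≠ 0 := hr1.ne'
  set u := x0 - xm with hu_def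
  set v := x1 - x0 with hv_def
  have hu : ⟪u, u⟫ = r₀ ^ 2 := by
    rw [real_inner_self_eq_norm_sq, h0]
  have hv : ⟪v, v⟫ = r₁ ^ 2 := by
    rw [real_inner_self_eq_norm_sq, h1]
  set s : ℝ := ⟪u, v⟫ with hs
  have hvu : ⟪v, u⟫ = s := (real_inner_comm v u).symm
  have hAn : ‖A‖ ^ 2 = ⟪A, A⟫ := (real_inner_self_eq_norm_sq A).symm
  have hBn : ‖B‖ ^ 2 = ⟪B, B⟫ := (real_inner_self_eq_norm_sq B).symm
  have hAA : ⟪((r₀ + r₁) / 2) ^ 3 • A, ((r₀ + r₁) / 2) ^ 3 • A⟫ =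
      ⟪(-(1:ℝ) / 2 + r₀ / (2 * r₁)) • v + (-(1:ℝ) / 2 + r₁ / (2 * r₀)) • u,
       (-(1:ℝ) / 2 + r₀ / (2 * r₁)) • v + (-(1:ℝ) / 2 + r₁ / (2 * r₀)) • u⟫ := by
    rw [hA]
  have hAB : ⟪((r₀ + r₁) / 2) ^ 3 • A, ((r₀ + r₁) / 2) ^ 2 • B⟫ =
      ⟪(-(1:ℝ) / 2 + r₀ / (2 * r₁)) • v + (-(1:ℝ) / 2 + r₁ / (2 * r₀)) • u,
       (1 - r₀ / (2 * r₁)) • v + ((1:ℝ) / 2 - r₁ / r₀) • u⟫ := by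
    rw [hA, hB]
  have hBB : ⟪((r₀ + r₁) / 2) ^ 2 • B, ((r₀ + r₁) / 2) ^ 2 • B⟫ =
      ⟪(1 - r₀ / (2 * r₁)) • v + ((1:ℝ) / 2 - r₁ / r₀) • u,
       (1 - r₀ / (2 * r₁)) • v + ((1:ℝ) / 2 - r₁ / r₀) • u⟫ := by
    rw [hB]
  simp only [inner_add_left, inner_add_right, real_inner_smul_left, real_inner_smul_right,
    hu, hv, hvu, ← hs] at hAA hAB hBB
  have hgi : ⟪r₀⁻¹ • u, r₁⁻¹ • v⟫ = r₀⁻¹ * (r₁⁻¹ * s) := by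
    rw [real_inner_smul_left, real_inner_smul_right]
  rw [hgi, hAn, hBn]
  refine ⟨?_, ?_, ?_⟩
  · calc ⟪A, A⟫ * ((r₀ + r₁) / 2) ^ 6
        = ((r₀ + r₁) / 2) ^ 3 * (((r₀ + r₁) / 2) ^ 3 * ⟪A, A⟫) := by ring
      _ = _ := hAA
      _ = ((1 - r₀⁻¹ * (r₁⁻¹ * s)) / 2) * (r₁ - r₀) ^ 2 := by field_simp; ring
  · calc ⟪A, B⟫ * ((r₀ + r₁) / 2) ^ 5
        = ((r₀ + r₁) / 2) ^ 2 * (((r₀ + r₁) / 2) ^ 3 * ⟪A, B⟫) := by ring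
      _ = _ := hAB
      _ = -(((1 - r₀⁻¹ * (r₁⁻¹ * s)) / 2) * ((2 * r₁ - r₀) * (r₁ - r₀))) := by
          field_simp; ring
  · calc ⟪B, B⟫ * ((r₀ + r₁) / 2) ^ 4
        = ((r₀ + r₁) / 2) ^ 2 * (((r₀ + r₁) / 2) ^ 2 * ⟪B, B⟫) := by ring
      _ = _ := hBB
      _ = ((1 - r₀⁻¹ * (r₁⁻¹ * s)) / 2) * (2 * r₁ - r₀) ^ 2 := by field_simp; ring
end

section
/- Let L > 0, C > 0. For each N ∈ ℕ let λ_N > 0, let 0 = t₀^N ≤ t₁^N < t₂^N < … < t_N^N ≤ t_{N+1}^N = L be a partition, and let y_N : [0,L] → ℝ³ be C¹ with absolutely continuous derivative and ∫₀^L |y_N''(t)|² dt ≤ C. Assume: |y_N'(t_i^N)| = λ_N for all i = 1,…,N; |y_N'(t)| = λ_N for all t ∈ [0,t₁^N] ∪ [t_N^N, L]; λ_N → 1; max_{0≤i≤N}(t_{i+1}^N − t_i^N) → 0; and y_N' converges pointwise on [0,L] to a function v : [0,L] → ℝ³. Then |v(t)| = 1 for every t ∈ [0,L]. -/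
/-!
Every `s ∈ [0,L]` lies either in an end interval, where `|y_N'(s)| = λ_N`, or within one mesh
width `h_N` to the right of a knot `t_i`, where `|y_N'(t_i)| = λ_N`. In the second case
Cauchy–Schwarz gives `|y_N'(s) - y_N'(t_i)| ≤ ∫_{t_i}^s |y_N''| ≤ √(h_N C)`. Hence
`|y_N'(s)| → 1`, and `|v(s)| = 1` in the limit.
-/

open MeasureTheory Set Filter Topology

theorem setIntegral_norm_le_sqrt_measureReal_mul_setIntegral_sq {α E : Type*} [MeasurableSpace α]
    [NormedAddCommGroup E] {μ : Measure α} {f : α → E} {s t : Set α}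
    (hf : MemLp f 2 (μ.restrict s)) (hts : t ⊆ s) (ht : μ t ≠ ⊤) :
    ∫ x in t, ‖f x‖ ∂μ ≤ √(μ.real t * ∫ x in s, ‖f x‖ ^ 2 ∂μ) := by
  have : IsFiniteMeasure (μ.restrict t) := isFiniteMeasure_restrict.2 ht
  have hsq_int : IntegrableOn (fun x => ‖f x‖ ^ 2) s μ := hf.integrable_norm_pow two_ne_zero
  have holder := integral_mul_le_Lp_mul_Lq_of_nonneg (μ := μ.restrict t)
    Real.HolderConjugate.two_two (f := fun x => ‖f x‖) (g := fun _ => (1 : ℝ))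
    (ae_of_all _ fun _ => norm_nonneg _) (ae_of_all _ fun _ => zero_le_one)
    (by simpa using (hf.mono_measure (Measure.restrict_mono hts le_rfl)).norm)
    (by simpa using memLp_const (1 : ℝ))
  have hsub : ∫ x in t, ‖f x‖ ^ 2 ∂μ ≤ ∫ x in s, ‖f x‖ ^ 2 ∂μ :=
    setIntegral_mono_set hsq_int (ae_of_all _ fun _ => sq_nonneg _) (ae_of_all _ hts)
  simp only [mul_one, Real.rpow_two, one_pow, integral_const, smul_eq_mul,
    measureReal_restrict_apply_univ] at holder
  calc ∫ x in t, ‖f x‖ ∂μ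
      ≤ (∫ x in t, ‖f x‖ ^ 2 ∂μ) ^ (1 / 2 : ℝ) * μ.real t ^ (1 / 2 : ℝ) := holder
    _ ≤ (∫ x in s, ‖f x‖ ^ 2 ∂μ) ^ (1 / 2 : ℝ) * μ.real t ^ (1 / 2 : ℝ) := by gcongr
    _ = √(μ.real t * ∫ x in s, ‖f x‖ ^ 2 ∂μ) := by
      rw [Real.sqrt_eq_rpow, Real.mul_rpow measureReal_nonneg
        (integral_nonneg fun _ => sq_nonneg _), mul_comm]

theorem norm_sub_le_sqrt_mul_integral_sq {E : Type*} [NormedAddCommGroup E] [NormedSpace ℝ E]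
    {L : ℝ} {g g' : ℝ → E} (hg : ∀ s ∈ Icc 0 L, g s = g 0 + ∫ σ in (0 : ℝ)..s, g' σ)
    (hg' : MemLp g' 2 (volume.restrict (Ioo 0 L))) {a b : ℝ} (ha : 0 ≤ a) (hab : a ≤ b)
    (hb : b ≤ L) :
    ‖g b - g a‖ ≤ √((b - a) * ∫ σ in Ioo 0 L, ‖g' σ‖ ^ 2) := by
  have hint : IntervalIntegrable g' volume 0 L :=
    (intervalIntegrable_iff_integrableOn_Ioo_of_le (ha.trans (hab.trans hb))).2
      (hg'.integrable one_le_two)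
  have hint_of_le {c : ℝ} (hc : c ∈ Icc 0 L) : IntervalIntegrable g' volume 0 c :=
    hint.mono_set (uIcc_subset_uIcc_left (uIcc_of_le (ha.trans (hab.trans hb)) ▸ hc))
  have hb' : b ∈ Icc 0 L := ⟨ha.trans hab, hb⟩
  have ha' : a ∈ Icc 0 L := ⟨ha, hab.trans hb⟩
  rw [hg b hb', hg a ha', add_sub_add_left_eq_sub,
    intervalIntegral.integral_interval_sub_left (hint_of_le hb') (hint_of_le ha'),
    intervalIntegral.integral_of_le hab, integral_Ioc_eq_integral_Ioo]
  calc ‖∫ σ in Ioo a b, g' σ‖ ≤ ∫ σ in Ioo a b, ‖g' σ‖ := norm_integral_le_integral_norm _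
    _ ≤ √(volume.real (Ioo a b) * ∫ σ in Ioo 0 L, ‖g' σ‖ ^ 2) :=
      setIntegral_norm_le_sqrt_measureReal_mul_setIntegral_sq hg'
        (Ioo_subset_Ioo ha hb) measure_Ioo_lt_top.ne
    _ = √((b - a) * ∫ σ in Ioo 0 L, ‖g' σ‖ ^ 2) := by rw [Real.volume_real_Ioo_of_le hab]

theorem le_one_or_le_last_or_exists_mem_Ico {t : ℕ → ℝ} {N : ℕ} (ht0 : t 0 = 0)
    (hmono : ∀ i < N, t i ≤ t (i + 1)) {s : ℝ} (hs : 0 ≤ s) :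
    s ≤ t 1 ∨ t N ≤ s ∨ ∃ i, 1 ≤ i ∧ i < N ∧ 0 ≤ t i ∧ s ∈ Ico (t i) (t (i + 1)) := by
  have hnonneg : ∀ i ≤ N, 0 ≤ t i := by
    intro i hi
    induction i with
    | zero => exact ht0.ge
    | succ k ih => exact (ih (by omega)).trans (hmono k (by omega))
  classical
  set i := Nat.findGreatest (fun k => t k ≤ s) N
  have his : t i ≤ s := Nat.findGreatest_spec (P := fun k => t k ≤ s) (Nat.zero_le N) (ht0 ▸ hs)
  rcases (Nat.findGreatest_le N : i ≤ N).eq_or_lt with hiN | hiN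
  · exact Or.inr (Or.inl (hiN ▸ his))
  have hsi : s < t (i + 1) :=
    not_le.1 (Nat.findGreatest_is_greatest (Nat.lt_succ_self i) hiN)
  rcases Nat.eq_zero_or_pos i with hi0 | hi0
  · exact Or.inl (hi0 ▸ hsi).le
  · exact Or.inr (Or.inr ⟨i, hi0, hiN, hnonneg i hiN.le, his, hsi⟩)

theorem abs_norm_sub_le_sqrt_mul_of_mesh_lt {E : Type*} [NormedAddCommGroup E]
    [NormedSpace ℝ E] {L C ε lam : ℝ} {t : ℕ → ℝ} {N : ℕ} {g g' : ℝ → E}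
    (ht0 : t 0 = 0) (hmono : ∀ i ≤ N, t i ≤ t (i + 1))
    (hg : ∀ s ∈ Icc 0 L, g s = g 0 + ∫ σ in (0 : ℝ)..s, g' σ)
    (hg' : MemLp g' 2 (volume.restrict (Ioo 0 L))) (henergy : ∫ s in Ioo 0 L, ‖g' s‖ ^ 2 ≤ C)
    (hknots : ∀ i, 1 ≤ i → i ≤ N → ‖g (t i)‖ = lam)
    (hends : ∀ s, s ∈ Icc 0 (t 1) ∪ Icc (t N) L → ‖g s‖ = lam)
    (hmesh : ∀ i ≤ N, t (i + 1) - t i < ε) {s : ℝ} (hs : s ∈ Icc 0 L) :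
    |‖g s‖ - lam| ≤ √(ε * C) := by
  rcases le_one_or_le_last_or_exists_mem_Ico ht0 (fun i hi => hmono i hi.le) hs.1 with
    hs1 | hsN | ⟨i, hi1, hiN, hti, hsi⟩
  · simp [hends s (Or.inl ⟨hs.1, hs1⟩)]
  · simp [hends s (Or.inr ⟨hsN, hs.2⟩)]
  have hlen : s - t i ≤ ε := by linarith [hsi.2, hmesh i hiN.le]
  calc |‖g s‖ - lam| = |‖g s‖ - ‖g (t i)‖| := by rw [hknots i hi1 hiN.le]
    _ ≤ ‖g s - g (t i)‖ := abs_norm_sub_norm_le _ _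
    _ ≤ √((s - t i) * ∫ σ in Ioo 0 L, ‖g' σ‖ ^ 2) :=
      norm_sub_le_sqrt_mul_integral_sq hg hg' hti hsi.1 hs.2
    _ ≤ √(ε * C) := by gcongr; linarith [hsi.1]

theorem stmt16_general (L C : ℝ)
    (lam : ℕ → ℝ) (t : ℕ → ℕ → ℝ)
    (yN' yN'' : ℕ → ℝ → EuclideanSpace ℝ (Fin 3))
    (v : ℝ → EuclideanSpace ℝ (Fin 3))
    -- the partition `0 = t₀ ≤ t₁ < t₂ < … < t_N ≤ t_{N+1} = L`:
    (ht0 : ∀ N, t N 0 = 0)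
    (hmono : ∀ N, ∀ i ≤ N, t N i ≤ t N (i + 1))
    -- `yN` is C¹ with absolutely continuous derivative and `yN'' ∈ L²`:
    (hAC : ∀ N, ∀ s ∈ Icc 0 L, yN' N s = yN' N 0 + ∫ σ in (0:ℝ)..s, yN'' N σ)
    (hL2 : ∀ N, MemLp (yN'' N) 2 (volume.restrict (Ioo 0 L)))
    -- uniformly bounded bending energy:
    (henergy : ∀ N, ∫ s in Ioo 0 L, ‖yN'' N s‖ ^ 2 ≤ C)
    -- the speed is `λ_N` at the knots and on the first and last subintervals:
    (hknots : ∀ N, ∀ i, 1 ≤ i → i ≤ N → ‖yN' N (t N i)‖ = lam N)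
    (hends : ∀ N, ∀ s, s ∈ Icc 0 (t N 1) ∪ Icc (t N N) L → ‖yN' N s‖ = lam N)
    -- `λ_N → 1`:
    (hlam : Tendsto lam atTop (𝓝 1))
    -- the mesh size tends to `0`:
    (hmesh : ∀ ε > (0:ℝ), ∃ N₀ : ℕ, ∀ N, N₀ ≤ N → ∀ i ≤ N, t N (i + 1) - t N i < ε)
    -- pointwise convergence of the derivatives:
    (hconv : ∀ s ∈ Icc 0 L, Tendsto (fun N => yN' N s) atTop (𝓝 (v s))) :
    ∀ s ∈ Icc 0 L, ‖v s‖ = 1 := by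
  intro s hs
  have hsqrt : Tendsto (fun ε => √(ε * C)) (𝓝[>] 0) (𝓝 0) := by
    simpa using ((continuous_id.mul continuous_const).sqrt.tendsto' 0 _ rfl).mono_left
      nhdsWithin_le_nhds
  have hspeed : Tendsto (fun N => ‖yN' N s‖ - lam N) atTop (𝓝 0) := by
    rw [Metric.tendsto_atTop]
    intro δ hδ
    obtain ⟨ε, hεδ, hε⟩ := ((hsqrt.eventually (gt_mem_nhds hδ)).and self_mem_nhdsWithin).exists
    obtain ⟨N₀, hN₀⟩ := hmesh ε hε
    refine ⟨N₀, fun N hN => ?_⟩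
    rw [Real.dist_eq, sub_zero]
    exact (abs_norm_sub_le_sqrt_mul_of_mesh_lt (ht0 N) (hmono N) (hAC N) (hL2 N) (henergy N)
      (hknots N) (hends N) (hN₀ N hN) hs).trans_lt hεδ
  exact tendsto_nhds_unique (hconv s hs).norm (by simpa using hspeed.add hlam)

/-- if `y_N` are C¹ curves with absolutely continuous derivatives, uniformly
bounded bending energy `∫₀^L |y_N''|² ≤ C`, speed exactly `λ_N` at the knots `t_i^N` and on
the first and last subintervals, `λ_N → 1`, mesh size tending to `0`, and `y_N' → v`
pointwise, then `|v| ≡ 1` on `[0,L]`. -/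
theorem stmt16 (L C : ℝ) (hL : 0 < L) (hC : 0 < C)
    (lam : ℕ → ℝ) (hlam_pos : ∀ N, 0 < lam N)
    (t : ℕ → ℕ → ℝ)
    (yN yN' yN'' : ℕ → ℝ → EuclideanSpace ℝ (Fin 3))
    (v : ℝ → EuclideanSpace ℝ (Fin 3))
    -- the partition `0 = t₀ ≤ t₁ < t₂ < … < t_N ≤ t_{N+1} = L`:
    (ht0 : ∀ N, t N 0 = 0) (htL : ∀ N, t N (N + 1) = L)
    (hmono : ∀ N, ∀ i ≤ N, t N i ≤ t N (i + 1))
    (hstrict : ∀ N, ∀ i, 1 ≤ i → i + 1 ≤ N → t N i < t N (i + 1))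
    -- `yN` is C¹ with absolutely continuous derivative and `yN'' ∈ L²`:
    (hderiv : ∀ N, ∀ s ∈ Icc 0 L, HasDerivWithinAt (yN N) (yN' N s) (Icc 0 L) s)
    (hAC : ∀ N, ∀ s ∈ Icc 0 L, yN' N s = yN' N 0 + ∫ σ in (0:ℝ)..s, yN'' N σ)
    (hL2 : ∀ N, MemLp (yN'' N) 2 (volume.restrict (Ioo 0 L)))
    -- uniformly bounded bending energy:
    (henergy : ∀ N, ∫ s in Ioo 0 L, ‖yN'' N s‖ ^ 2 ≤ C)
    -- the speed is `λ_N` at the knots and on the first and last subintervals: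
    (hknots : ∀ N, ∀ i, 1 ≤ i → i ≤ N → ‖yN' N (t N i)‖ = lam N)
    (hends : ∀ N, ∀ s, s ∈ Icc 0 (t N 1) ∪ Icc (t N N) L → ‖yN' N s‖ = lam N)
    -- `λ_N → 1`:
    (hlam : Tendsto lam atTop (𝓝 1))
    -- the mesh size tends to `0`:
    (hmesh : ∀ ε > (0:ℝ), ∃ N₀ : ℕ, ∀ N, N₀ ≤ N → ∀ i ≤ N, t N (i + 1) - t N i < ε)
    -- pointwise convergence of the derivatives:
    (hconv : ∀ s ∈ Icc 0 L, Tendsto (fun N => yN' N s) atTop (𝓝 (v s))) :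
    ∀ s ∈ Icc 0 L, ‖v s‖ = 1 :=
  stmt16_general L C lam t yN' yN'' v ht0 hmono hAC hL2 henergy hknots hends hlam hmesh hconv
end

section
/- Let L > 0, C > 0 and let u : [0,L] → ℝ³ be smooth. For each N ∈ ℕ let 0 = s₀^N < s₁^N < … < s_N^N = L be nodes satisfying |s_i^N − s_{i−1}^N − L/N| ≤ C·(L/N)³ for all i = 1,…,N. Then lim_{N→∞} (L/N)·Σ_{i=1}^{N−1} |(u(s_{i−1}^N) − 2u(s_i^N) + u(s_{i+1}^N))·(N/L)²|² = ∫₀^L |u''(s)|² ds. -/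
/-!
Expanding `u` to second order around each interior node `s_i` (with a third-derivative
remainder) shows that the second difference quotient is `u''(s_i) + O(h)`, `h = L / N`: the
first-order terms cancel up to `|(s_{i+1} - s_i) - (s_i - s_{i-1})| = O(h³)`, and the
second-order terms give `h² u''(s_i)` up to `O(h⁴)`, both because the spacings are `h + O(h³)`.
So the discrete energy is within `O(h)` of the Riemann sum `h ∑ |u''(s_i)|²`, and this is within
`O(h)` of `∫₀^L |u''|²` since `|u''|²` is Lipschitz.
-/

open MeasureTheory Set Filter Topology
open scoped NNReal

variable {E : Type*} [NormedAddCommGroup E] [NormedSpace ℝ E]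

theorem Convex.norm_sub_le_mul_abs_pow_succ {g g' : ℝ → E} {S : Set ℝ} (hS : Convex ℝ S)
    (hg : ∀ y ∈ S, HasDerivWithinAt g (g' y) S y) {K m : ℝ} {k : ℕ} (hm : m ∈ S)
    (hg' : ∀ y ∈ S, ‖g' y‖ ≤ K * |y - m| ^ k) {t : ℝ} (ht : t ∈ S) :
    ‖g t - g m‖ ≤ K * |t - m| ^ (k + 1) := by
  rcases eq_or_ne t m with rfl | htm
  · simp
  have hK : 0 ≤ K := nonneg_of_mul_nonneg_left ((norm_nonneg _).trans (hg' t ht))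
    (pow_pos (abs_pos.2 (sub_ne_zero.2 htm)) k)
  have hsub : uIcc m t ⊆ S := by
    rw [← segment_eq_uIcc]
    exact hS.segment_subset hm ht
  have := (convex_uIcc m t).norm_image_sub_le_of_norm_hasDerivWithin_le (C := K * |t - m| ^ k)
    (fun y hy ↦ (hg y (hsub hy)).mono hsub)
    (fun y hy ↦ (hg' y (hsub hy)).trans <|
      mul_le_mul_of_nonneg_left
        (pow_le_pow_left₀ (abs_nonneg _) (abs_sub_left_of_mem_uIcc hy) k) hK)
    left_mem_uIcc right_mem_uIcc
  rwa [Real.norm_eq_abs, mul_assoc, ← pow_succ] at this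

theorem Convex.norm_taylor_two_le {f f₁ f₂ f₃ : ℝ → E} {S : Set ℝ} (hS : Convex ℝ S)
    (hf : ∀ t ∈ S, HasDerivWithinAt f (f₁ t) S t) (hf₁ : ∀ t ∈ S, HasDerivWithinAt f₁ (f₂ t) S t)
    (hf₂ : ∀ t ∈ S, HasDerivWithinAt f₂ (f₃ t) S t) {M : ℝ} (hM : ∀ t ∈ S, ‖f₃ t‖ ≤ M)
    {m t : ℝ} (hm : m ∈ S) (ht : t ∈ S) :
    ‖f t - f m - (t - m) • f₁ m - ((t - m) ^ 2 / 2) • f₂ m‖ ≤ M * |t - m| ^ 3 := by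
  have h₂ : ∀ y ∈ S, ‖f₂ y - f₂ m‖ ≤ M * |y - m| ^ 1 := fun y hy ↦
    hS.norm_sub_le_mul_abs_pow_succ hf₂ hm (by simpa using hM) hy
  have h₁ : ∀ y ∈ S, ‖f₁ y - f₁ m - (y - m) • f₂ m‖ ≤ M * |y - m| ^ 2 := by
    intro y hy
    have hd : ∀ z ∈ S, HasDerivWithinAt (fun z ↦ f₁ z - f₁ m - (z - m) • f₂ m)
        (f₂ z - f₂ m) S z := fun z hz ↦
      (((hf₁ z hz).sub_const (f₁ m)).sub
        (((hasDerivWithinAt_id z S).sub_const m).smul_const (f₂ m))).congr_deriv (by simp)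
    simpa using hS.norm_sub_le_mul_abs_pow_succ hd hm h₂ hy
  have hd : ∀ z ∈ S, HasDerivWithinAt
      (fun z ↦ f z - f m - (z - m) • f₁ m - ((z - m) ^ 2 / 2) • f₂ m)
      (f₁ z - f₁ m - (z - m) • f₂ m) S z := fun z hz ↦ by
    have hq : HasDerivWithinAt (fun z : ℝ ↦ (z - m) ^ 2 / 2) (z - m) S z := by
      simpa using (((hasDerivWithinAt_id z S).sub_const m).pow 2).div_const 2
    exact ((((hf z hz).sub_const (f m)).sub
      (((hasDerivWithinAt_id z S).sub_const m).smul_const (f₁ m))).sub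
      (hq.smul_const (f₂ m))).congr_deriv (by simp)
  simpa using hS.norm_sub_le_mul_abs_pow_succ hd hm h₁ ht

theorem abs_sq_sub_sq_le_of_abs_sub_le {x h ε : ℝ} (hx : |x - h| ≤ ε) (hε : ε ≤ h) :
    |x ^ 2 - h ^ 2| ≤ 3 * h * ε := by
  have hε0 : 0 ≤ ε := (abs_nonneg _).trans hx
  have hxh : |x + h| ≤ 3 * h := by
    rw [abs_le] at hx ⊢
    constructor <;> linarith
  rw [sq_sub_sq, abs_mul]
  exact mul_le_mul hxh hx (abs_nonneg _) (by linarith)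

theorem Convex.norm_second_diff_sub_le {f f₁ f₂ f₃ : ℝ → E} {S : Set ℝ} (hS : Convex ℝ S)
    (hf : ∀ t ∈ S, HasDerivWithinAt f (f₁ t) S t) (hf₁ : ∀ t ∈ S, HasDerivWithinAt f₁ (f₂ t) S t)
    (hf₂ : ∀ t ∈ S, HasDerivWithinAt f₂ (f₃ t) S t) {M₁ M₂ M₃ : ℝ}
    (hM₁ : ∀ t ∈ S, ‖f₁ t‖ ≤ M₁) (hM₂ : ∀ t ∈ S, ‖f₂ t‖ ≤ M₂) (hM₃ : ∀ t ∈ S, ‖f₃ t‖ ≤ M₃)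
    {a m b h ε : ℝ} (ha : a ∈ S) (hm : m ∈ S) (hb : b ∈ S) (hε : ε ≤ h)
    (hma : |m - a - h| ≤ ε) (hbm : |b - m - h| ≤ ε) :
    ‖f a - (2 : ℝ) • f m + f b - h ^ 2 • f₂ m‖ ≤
      16 * M₃ * h ^ 3 + (2 * M₁ + 3 * M₂ * h) * ε := by
  have hε0 : 0 ≤ ε := (abs_nonneg _).trans hma
  have hM₃0 : 0 ≤ M₃ := (norm_nonneg _).trans (hM₃ m hm)
  have hRem : ∀ t ∈ S, |t - m| ≤ 2 * h →
      ‖f t - f m - (t - m) • f₁ m - ((t - m) ^ 2 / 2) • f₂ m‖ ≤ 8 * M₃ * h ^ 3 := by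
    intro t ht htm
    calc _ ≤ M₃ * |t - m| ^ 3 := hS.norm_taylor_two_le hf hf₁ hf₂ hM₃ hm ht
      _ ≤ M₃ * (2 * h) ^ 3 := by gcongr
      _ = 8 * M₃ * h ^ 3 := by ring
  have hRa := hRem a ha (by rw [abs_le] at hma ⊢; constructor <;> linarith)
  have hRb := hRem b hb (by rw [abs_le] at hbm ⊢; constructor <;> linarith)
  have hlin : |(a - m) + (b - m)| ≤ 2 * ε := by
    rw [abs_le] at hma hbm ⊢
    constructor <;> linarith
  have hquad : |((a - m) ^ 2 + (b - m) ^ 2) / 2 - h ^ 2| ≤ 3 * h * ε := by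
    have hqa := abs_sq_sub_sq_le_of_abs_sub_le hma hε
    have hqb := abs_sq_sub_sq_le_of_abs_sub_le hbm hε
    rw [show (a - m) ^ 2 = (m - a) ^ 2 by ring]
    rw [abs_le] at hqa hqb ⊢
    constructor <;> linarith
  calc ‖f a - (2 : ℝ) • f m + f b - h ^ 2 • f₂ m‖
      = ‖(f a - f m - (a - m) • f₁ m - ((a - m) ^ 2 / 2) • f₂ m)
          + (f b - f m - (b - m) • f₁ m - ((b - m) ^ 2 / 2) • f₂ m)
          + ((a - m) + (b - m)) • f₁ m
          + (((a - m) ^ 2 + (b - m) ^ 2) / 2 - h ^ 2) • f₂ m‖ := by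
        congr 1; module
    _ ≤ 8 * M₃ * h ^ 3 + 8 * M₃ * h ^ 3 + 2 * ε * M₁ + 3 * h * ε * M₂ := by
        refine norm_add₄_le.trans ?_
        rw [norm_smul, norm_smul, Real.norm_eq_abs, Real.norm_eq_abs]
        have hh : 0 ≤ h := hε0.trans hε
        gcongr
        exacts [hM₁ m hm, hM₂ m hm]
    _ = 16 * M₃ * h ^ 3 + (2 * M₁ + 3 * M₂ * h) * ε := by ring

theorem Convex.norm_second_diff_quot_sub_le {f f₁ f₂ f₃ : ℝ → E} {S : Set ℝ} (hS : Convex ℝ S)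
    (hf : ∀ t ∈ S, HasDerivWithinAt f (f₁ t) S t) (hf₁ : ∀ t ∈ S, HasDerivWithinAt f₁ (f₂ t) S t)
    (hf₂ : ∀ t ∈ S, HasDerivWithinAt f₂ (f₃ t) S t) {M₁ M₂ M₃ : ℝ}
    (hM₁ : ∀ t ∈ S, ‖f₁ t‖ ≤ M₁) (hM₂ : ∀ t ∈ S, ‖f₂ t‖ ≤ M₂) (hM₃ : ∀ t ∈ S, ‖f₃ t‖ ≤ M₃)
    {a m b h C : ℝ} (ha : a ∈ S) (hm : m ∈ S) (hb : b ∈ S) (hh : 0 < h) (hCh : C * h ^ 2 ≤ 1)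
    (hma : |m - a - h| ≤ C * h ^ 3) (hbm : |b - m - h| ≤ C * h ^ 3) :
    ‖h⁻¹ ^ 2 • (f a - (2 : ℝ) • f m + f b) - f₂ m‖ ≤
      (16 * M₃ + C * (2 * M₁ + 3 * M₂ * h)) * h := by
  have hsd := hS.norm_second_diff_sub_le hf hf₁ hf₂ hM₁ hM₂ hM₃ ha hm hb (by nlinarith) hma hbm
  rw [show h⁻¹ ^ 2 • (f a - (2 : ℝ) • f m + f b) - f₂ m =
      h⁻¹ ^ 2 • (f a - (2 : ℝ) • f m + f b - h ^ 2 • f₂ m) by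
    rw [smul_sub, smul_smul, ← mul_pow, inv_mul_cancel₀ hh.ne', one_pow, one_smul],
    norm_smul, norm_pow, norm_inv, Real.norm_of_nonneg hh.le]
  calc _ ≤ h⁻¹ ^ 2 * (16 * M₃ * h ^ 3 + (2 * M₁ + 3 * M₂ * h) * (C * h ^ 3)) := by gcongr
    _ = (16 * M₃ + C * (2 * M₁ + 3 * M₂ * h)) * h := by field_simp

section Norm

variable {F : Type*} [SeminormedAddCommGroup F]

theorem abs_norm_sq_sub_norm_sq_le (v w : F) :
    |‖v‖ ^ 2 - ‖w‖ ^ 2| ≤ ‖v - w‖ * (‖v‖ + ‖w‖) := by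
  rw [sq_sub_sq, abs_mul, abs_of_nonneg (by positivity : 0 ≤ ‖v‖ + ‖w‖), mul_comm]
  exact mul_le_mul_of_nonneg_right (abs_norm_sub_norm_le v w) (by positivity)

theorem LipschitzOnWith.norm_sq {α : Type*} [PseudoMetricSpace α] {f : α → F} {s : Set α}
    {K M : ℝ≥0} (hf : LipschitzOnWith K f s) (hM : ∀ x ∈ s, ‖f x‖ ≤ M) :
    LipschitzOnWith (2 * M * K) (fun x ↦ ‖f x‖ ^ 2) s := by
  refine LipschitzOnWith.of_dist_le_mul fun x hx y hy ↦ ?_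
  have hxy : ‖f x - f y‖ ≤ K * dist x y := by
    rw [← dist_eq_norm]
    exact hf.dist_le_mul x hx y hy
  calc dist (‖f x‖ ^ 2) (‖f y‖ ^ 2) ≤ ‖f x - f y‖ * (‖f x‖ + ‖f y‖) :=
        abs_norm_sq_sub_norm_sq_le _ _
    _ ≤ (K * dist x y) * (M + M) := by gcongr <;> simp_all
    _ = ↑(2 * M * K) * dist x y := by push_cast; ring

theorem abs_sum_norm_sq_sub_sum_norm_sq_le {ι : Type*} {s : Finset ι} {v w : ι → F} {δ B : ℝ}
    (hvw : ∀ i ∈ s, ‖v i - w i‖ ≤ δ) (hw : ∀ i ∈ s, ‖w i‖ ≤ B) :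
    |∑ i ∈ s, ‖v i‖ ^ 2 - ∑ i ∈ s, ‖w i‖ ^ 2| ≤ s.card * (δ * (δ + 2 * B)) := by
  rw [← Finset.sum_sub_distrib, ← nsmul_eq_mul]
  refine (Finset.abs_sum_le_sum_abs _ _).trans (Finset.sum_le_card_nsmul _ _ _ fun i hi ↦ ?_)
  have hv : ‖v i‖ ≤ δ + B := by
    linarith [norm_le_norm_add_norm_sub' (v i) (w i), hvw i hi, hw i hi]
  calc _ ≤ ‖v i - w i‖ * (‖v i‖ + ‖w i‖) := abs_norm_sq_sub_norm_sq_le _ _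
    _ ≤ δ * ((δ + B) + B) := by
        gcongr
        exacts [(norm_nonneg _).trans (hvw i hi), hvw i hi, hw i hi]
    _ = δ * (δ + 2 * B) := by ring

end Norm

theorem abs_sub_mul_sub_integral_le {g : ℝ → ℝ} {K : ℝ≥0} {a b : ℝ} (hab : a ≤ b)
    (hg : LipschitzOnWith K g (Icc a b)) :
    |(b - a) * g b - ∫ t in a..b, g t| ≤ K * (b - a) ^ 2 := by
  have hint : IntervalIntegrable g volume a b := hg.continuousOn.intervalIntegrable_of_Icc hab
  have hbound : ∀ t ∈ uIoc a b, ‖g b - g t‖ ≤ K * (b - a) := fun t ht ↦ by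
    rw [uIoc_of_le hab] at ht
    have := hg.dist_le_mul b (right_mem_Icc.2 hab) t (Ioc_subset_Icc_self ht)
    rw [Real.dist_eq, Real.dist_eq, abs_of_nonneg (sub_nonneg.2 ht.2)] at this
    rw [Real.norm_eq_abs]
    exact this.trans (by gcongr; linarith [ht.1])
  rw [show (b - a) * g b - ∫ t in a..b, g t = ∫ t in a..b, (g b - g t) by
    rw [intervalIntegral.integral_sub intervalIntegrable_const hint,
      intervalIntegral.integral_const, smul_eq_mul]]
  calc _ ≤ K * (b - a) * |b - a| := by
        simpa using intervalIntegral.norm_integral_le_of_norm_le_const hbound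
    _ = K * (b - a) ^ 2 := by rw [abs_of_nonneg (sub_nonneg.2 hab)]; ring

theorem abs_sum_mul_sub_integral_le {g : ℝ → ℝ} {K : ℝ≥0} {x : ℕ → ℝ} {n : ℕ}
    (hx : MonotoneOn x (Iic n)) (hg : LipschitzOnWith K g (Icc (x 0) (x n))) :
    |∑ k ∈ Finset.range n, (x (k + 1) - x k) * g (x (k + 1)) - ∫ t in x 0..x n, g t| ≤
      K * ∑ k ∈ Finset.range n, (x (k + 1) - x k) ^ 2 := by
  have hle : ∀ k < n, x k ≤ x (k + 1) := fun k hk ↦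
    hx (mem_Iic.2 hk.le) (mem_Iic.2 hk) k.le_succ
  have hsub : ∀ k < n, LipschitzOnWith K g (Icc (x k) (x (k + 1))) := fun k hk ↦
    hg.mono <| Icc_subset_Icc (hx (mem_Iic.2 (Nat.zero_le n)) (mem_Iic.2 hk.le) k.zero_le)
      (hx (mem_Iic.2 hk) (mem_Iic.2 le_rfl) hk)
  rw [← intervalIntegral.sum_integral_adjacent_intervals fun k hk ↦
      (hsub k hk).continuousOn.intervalIntegrable_of_Icc (hle k hk),
    ← Finset.sum_sub_distrib, Finset.mul_sum]
  refine (Finset.abs_sum_le_sum_abs _ _).trans (Finset.sum_le_sum fun k hk ↦ ?_)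
  rw [Finset.mem_range] at hk
  exact abs_sub_mul_sub_integral_le (hle k hk) (hsub k hk)

theorem sum_Icc_one_eq_sum_range {M : Type*} [AddCommMonoid M] (f : ℕ → M) (m : ℕ) :
    ∑ i ∈ Finset.Icc 1 m, f i = ∑ k ∈ Finset.range m, f (k + 1) := by
  rw [Finset.range_eq_Ico, Finset.sum_Ico_add' f 0 m 1, zero_add, Finset.Ico_add_one_right_eq_Icc]

theorem abs_mul_sum_sub_integral_le {g : ℝ → ℝ} {K : ℝ≥0} {B : ℝ} {x : ℕ → ℝ} {n : ℕ}
    {h ε : ℝ} (hn : 0 < n) (hx : MonotoneOn x (Iic n))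
    (hg : LipschitzOnWith K g (Icc (x 0) (x n))) (hB : ∀ t ∈ Icc (x 0) (x n), |g t| ≤ B)
    (hε : ε ≤ h) (hstep : ∀ k < n, |x (k + 1) - x k - h| ≤ ε) :
    |h * ∑ i ∈ Finset.Icc 1 (n - 1), g (x i) - ∫ t in x 0..x n, g t| ≤
      n * (4 * K * h ^ 2 + ε * B) + h * B := by
  have hh : 0 ≤ h := ((abs_nonneg _).trans (hstep 0 hn)).trans hε
  have hmem : ∀ k ≤ n, x k ∈ Icc (x 0) (x n) := fun k hk ↦
    (hx.mono Icc_subset_Iic_self).mapsTo_Icc ⟨k.zero_le, hk⟩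
  have hsplit : h * ∑ i ∈ Finset.Icc 1 (n - 1), g (x i) =
      ∑ k ∈ Finset.range n, h * g (x (k + 1)) - h * g (x n) := by
    obtain ⟨m, rfl⟩ := Nat.exists_eq_add_of_lt hn
    rw [zero_add, Nat.add_sub_cancel, Finset.sum_range_succ, sum_Icc_one_eq_sum_range,
      Finset.mul_sum]
    ring
  have hRiemann := abs_sum_mul_sub_integral_le hx hg
  have hsq : ∑ k ∈ Finset.range n, (x (k + 1) - x k) ^ 2 ≤ n * (2 * h) ^ 2 := by
    have := Finset.sum_le_card_nsmul (Finset.range n) (fun k ↦ (x (k + 1) - x k) ^ 2)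
      ((2 * h) ^ 2) fun k hk ↦ by
        have hk := Finset.mem_range.1 hk
        have hΔ : 0 ≤ x (k + 1) - x k :=
          sub_nonneg.2 (hx (mem_Iic.2 hk.le) (mem_Iic.2 hk) k.le_succ)
        exact pow_le_pow_left₀ hΔ (by linarith [(abs_le.1 (hstep k hk)).2]) 2
    simpa using this
  have hspacing : |∑ k ∈ Finset.range n, h * g (x (k + 1)) -
      ∑ k ∈ Finset.range n, (x (k + 1) - x k) * g (x (k + 1))| ≤ n * (ε * B) := by
    rw [← Finset.sum_sub_distrib]
    refine (Finset.abs_sum_le_sum_abs _ _).trans ?_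
    have := Finset.sum_le_card_nsmul (Finset.range n)
      (fun k ↦ |h * g (x (k + 1)) - (x (k + 1) - x k) * g (x (k + 1))|) (ε * B) fun k hk ↦ by
        have hk := Finset.mem_range.1 hk
        rw [← sub_mul, abs_mul, abs_sub_comm]
        exact mul_le_mul (hstep k hk) (hB _ (hmem _ hk)) (abs_nonneg _)
          ((abs_nonneg _).trans (hstep k hk))
    simpa using this
  have hlast : |h * g (x n)| ≤ h * B := by
    rw [abs_mul, abs_of_nonneg hh]
    exact mul_le_mul_of_nonneg_left (hB _ (hmem n le_rfl)) hh
  rw [hsplit]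
  have := mul_le_mul_of_nonneg_left hsq K.coe_nonneg
  rw [abs_le] at hRiemann hspacing hlast ⊢
  constructor <;> linarith

noncomputable def bendingEnergy (f : ℝ → E) (x : ℕ → ℝ) (n : ℕ) (h : ℝ) : ℝ :=
  h * ∑ i ∈ Finset.Icc 1 (n - 1),
    ‖h⁻¹ ^ 2 • (f (x (i - 1)) - (2 : ℝ) • f (x i) + f (x (i + 1)))‖ ^ 2

theorem abs_bendingEnergy_sub_integral_le {f f₁ f₂ f₃ : ℝ → E} {a b : ℝ} {M₁ M₂ M₃ : ℝ≥0}
    (hf : ∀ t ∈ Icc a b, HasDerivWithinAt f (f₁ t) (Icc a b) t)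
    (hf₁ : ∀ t ∈ Icc a b, HasDerivWithinAt f₁ (f₂ t) (Icc a b) t)
    (hf₂ : ∀ t ∈ Icc a b, HasDerivWithinAt f₂ (f₃ t) (Icc a b) t)
    (hM₁ : ∀ t ∈ Icc a b, ‖f₁ t‖ ≤ M₁) (hM₂ : ∀ t ∈ Icc a b, ‖f₂ t‖ ≤ M₂)
    (hM₃ : ∀ t ∈ Icc a b, ‖f₃ t‖ ≤ M₃) {x : ℕ → ℝ} {n : ℕ} {h C : ℝ} (hab : a < b)
    (hx0 : x 0 = a) (hxn : x n = b) (hx : MonotoneOn x (Iic n)) (hnh : n * h = b - a)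
    (hCh : C * h ^ 2 ≤ 1) (hstep : ∀ k < n, |x (k + 1) - x k - h| ≤ C * h ^ 3) :
    |bendingEnergy f x n h - ∫ t in a..b, ‖f₂ t‖ ^ 2| ≤
      (b - a) * (8 * M₂ * M₃ * h + C * M₂ ^ 2 * h ^ 2 +
        (16 * M₃ + C * (2 * M₁ + 3 * M₂ * h)) * h *
          ((16 * M₃ + C * (2 * M₁ + 3 * M₂ * h)) * h + 2 * M₂)) + M₂ ^ 2 * h := by
  set D := (16 * M₃ + C * (2 * M₁ + 3 * M₂ * h)) * h
  have hn : 0 < n := Nat.pos_of_ne_zero fun hn ↦ by simp [hn] at hnh; linarith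
  have hh : 0 < h := pos_of_mul_pos_right (by linarith) (Nat.cast_nonneg n)
  have hε : C * h ^ 3 ≤ h := by nlinarith
  have hC : 0 ≤ C :=
    nonneg_of_mul_nonneg_left ((abs_nonneg _).trans (hstep 0 hn)) (pow_pos hh 3)
  have hD : 0 ≤ D := mul_nonneg (add_nonneg (by positivity)
    (mul_nonneg hC (add_nonneg (by positivity) (mul_nonneg (by positivity) hh.le)))) hh.le
  have hmem : ∀ k ≤ n, x k ∈ Icc a b := fun k hk ↦
    hx0 ▸ hxn ▸ (hx.mono Icc_subset_Iic_self).mapsTo_Icc ⟨k.zero_le, hk⟩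
  have hquot : ∀ i ∈ Finset.Icc 1 (n - 1),
      ‖h⁻¹ ^ 2 • (f (x (i - 1)) - (2 : ℝ) • f (x i) + f (x (i + 1))) - f₂ (x i)‖ ≤ D := by
    intro i hi
    obtain ⟨hi1, hin⟩ := Finset.mem_Icc.1 hi
    have hprev := hstep (i - 1) (by omega)
    rw [Nat.sub_add_cancel hi1] at hprev
    exact (convex_Icc a b).norm_second_diff_quot_sub_le hf hf₁ hf₂ hM₁ hM₂ hM₃
      (hmem _ (by omega)) (hmem _ (by omega)) (hmem _ (by omega)) hh hCh hprev (hstep i (by omega))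
  have hcurv := abs_sum_norm_sq_sub_sum_norm_sq_le hquot fun i hi ↦
    hM₂ _ (hmem i (by have := (Finset.mem_Icc.1 hi).2; omega))
  have hcard : ((Finset.Icc 1 (n - 1)).card : ℝ) ≤ n := by
    rw [Nat.card_Icc]
    exact_mod_cast (by omega)
  have hlip : LipschitzOnWith (2 * M₂ * M₃) (fun t ↦ ‖f₂ t‖ ^ 2) (Icc a b) :=
    ((convex_Icc a b).lipschitzOnWith_of_nnnorm_hasDerivWithin_le hf₂
      fun t ht ↦ NNReal.coe_le_coe.1 (hM₃ t ht)).norm_sq hM₂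
  have hriemann := abs_mul_sum_sub_integral_le hn hx (hx0 ▸ hxn ▸ hlip)
    (B := M₂ ^ 2) (fun t ht ↦ by
      rw [abs_of_nonneg (by positivity)]
      exact pow_le_pow_left₀ (norm_nonneg _) (hM₂ t (hx0 ▸ hxn ▸ ht)) 2) hε hstep
  rw [hx0, hxn] at hriemann
  refine (abs_sub_le _ (h * ∑ i ∈ Finset.Icc 1 (n - 1), ‖f₂ (x i)‖ ^ 2) _).trans ?_
  rw [bendingEnergy, ← mul_sub, abs_mul, abs_of_pos hh]
  calc _ ≤ h * (n * (D * (D + 2 * M₂))) +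
          (n * (4 * ↑(2 * M₂ * M₃) * h ^ 2 + C * h ^ 3 * M₂ ^ 2) + h * M₂ ^ 2) := by
        gcongr
        exact hcurv.trans (mul_le_mul_of_nonneg_right hcard (by positivity))
    _ = _ := by rw [← hnh]; push_cast; ring

theorem tendsto_bendingEnergy {f f₁ f₂ f₃ : ℝ → E} {a b C : ℝ} {M₁ M₂ M₃ : ℝ≥0}
    (hf : ∀ t ∈ Icc a b, HasDerivWithinAt f (f₁ t) (Icc a b) t)
    (hf₁ : ∀ t ∈ Icc a b, HasDerivWithinAt f₁ (f₂ t) (Icc a b) t)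
    (hf₂ : ∀ t ∈ Icc a b, HasDerivWithinAt f₂ (f₃ t) (Icc a b) t)
    (hM₁ : ∀ t ∈ Icc a b, ‖f₁ t‖ ≤ M₁) (hM₂ : ∀ t ∈ Icc a b, ‖f₂ t‖ ≤ M₂)
    (hM₃ : ∀ t ∈ Icc a b, ‖f₃ t‖ ≤ M₃) (hab : a < b) {x : ℕ → ℕ → ℝ}
    (hx0 : ∀ N, 1 ≤ N → x N 0 = a) (hxN : ∀ N, 1 ≤ N → x N N = b)
    (hx : ∀ N, 1 ≤ N → MonotoneOn (x N) (Iic N))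
    (hstep : ∀ N, 1 ≤ N → ∀ k < N, |x N (k + 1) - x N k - (b - a) / N| ≤ C * ((b - a) / N) ^ 3) :
    Tendsto (fun N : ℕ ↦ bendingEnergy f (x N) N ((b - a) / N)) atTop
      (𝓝 (∫ t in a..b, ‖f₂ t‖ ^ 2)) := by
  set bound : ℝ → ℝ := fun h ↦ (b - a) * (8 * M₂ * M₃ * h + C * M₂ ^ 2 * h ^ 2 +
    (16 * M₃ + C * (2 * M₁ + 3 * M₂ * h)) * h *
      ((16 * M₃ + C * (2 * M₁ + 3 * M₂ * h)) * h + 2 * M₂)) + M₂ ^ 2 * h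
  have hmesh := tendsto_const_div_atTop_nhds_zero_nat (b - a)
  have hbound : Tendsto (fun N : ℕ ↦ bound ((b - a) / N)) atTop (𝓝 0) := by
    have := ((by fun_prop : Continuous bound).tendsto 0).comp hmesh
    rwa [show bound 0 = 0 by simp [bound]] at this
  have hsmall : ∀ᶠ N : ℕ in atTop, C * ((b - a) / N) ^ 2 ≤ 1 :=
    ((hmesh.pow 2).const_mul C).eventually_le_const (by simp)
  refine tendsto_iff_norm_sub_tendsto_zero.2 (squeeze_zero_norm' ?_ hbound)
  filter_upwards [eventually_ge_atTop 1, hsmall] with N hN hCN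
  rw [norm_norm, Real.norm_eq_abs]
  exact abs_bendingEnergy_sub_integral_le hf hf₁ hf₂ hM₁ hM₂ hM₃ hab (hx0 N hN) (hxN N hN)
    (hx N hN) (by field_simp) hCN (hstep N hN)

theorem ContDiffOn.hasDerivWithinAt_iteratedDerivWithin {𝕜 : Type*} [NontriviallyNormedField 𝕜]
    {F : Type*} [NormedAddCommGroup F] [NormedSpace 𝕜 F] {f : 𝕜 → F} {s : Set 𝕜}
    {n : WithTop ℕ∞} {k : ℕ} (hf : ContDiffOn 𝕜 n f s) (hk : k < n) (hs : UniqueDiffOn 𝕜 s)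
    {t : 𝕜} (ht : t ∈ s) :
    HasDerivWithinAt (iteratedDerivWithin k f s) (iteratedDerivWithin (k + 1) f s t) s t := by
  rw [iteratedDerivWithin_succ]
  exact (hf.differentiableOn_iteratedDerivWithin hk hs t ht).hasDerivWithinAt

theorem ContDiffOn.exists_bound_iteratedDerivWithin {𝕜 : Type*} [NontriviallyNormedField 𝕜]
    {F : Type*} [NormedAddCommGroup F] [NormedSpace 𝕜 F] {f : 𝕜 → F} {s : Set 𝕜}
    {n : WithTop ℕ∞} {k : ℕ} (hf : ContDiffOn 𝕜 n f s) (hk : k ≤ n) (hs : UniqueDiffOn 𝕜 s)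
    (hsc : IsCompact s) : ∃ M : ℝ≥0, ∀ t ∈ s, ‖iteratedDerivWithin k f s t‖ ≤ M := by
  obtain ⟨M, hM⟩ :=
    (hsc.image_of_continuousOn (hf.continuousOn_iteratedDerivWithin hk hs).nnnorm).bddAbove
  exact ⟨M, fun t ht ↦ hM (mem_image_of_mem _ ht)⟩

theorem stmt17_general (L C : ℝ) (hL : 0 < L)
    (u : ℝ → EuclideanSpace ℝ (Fin 3))
    (hu : ContDiffOn ℝ (⊤ : ℕ∞) u (Icc 0 L))
    (s : ℕ → ℕ → ℝ)
    (hs0 : ∀ N : ℕ, 1 ≤ N → s N 0 = 0)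
    (hsN : ∀ N : ℕ, 1 ≤ N → s N N = L)
    (hmono : ∀ N : ℕ, 1 ≤ N → ∀ i, i < N → s N i < s N (i + 1))
    (hclose : ∀ N : ℕ, 1 ≤ N → ∀ i, 1 ≤ i → i ≤ N →
      |s N i - s N (i - 1) - L / N| ≤ C * (L / N) ^ 3) :
    Filter.Tendsto
      (fun N : ℕ => (L / N) * ∑ i ∈ Finset.Icc 1 (N - 1),
        ‖(((N : ℝ) / L) ^ 2) •
          (u (s N (i - 1)) - (2:ℝ) • u (s N i) + u (s N (i + 1)))‖ ^ 2)
      atTop (𝓝 (∫ σ in (0:ℝ)..L, ‖iteratedDerivWithin 2 u (Icc 0 L) σ‖ ^ 2)) := by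
  set S := Icc (0 : ℝ) L
  have hS : UniqueDiffOn ℝ S := uniqueDiffOn_Icc hL
  have hderiv (k : ℕ) : ∀ t ∈ S, HasDerivWithinAt (iteratedDerivWithin k u S)
      (iteratedDerivWithin (k + 1) u S t) S t := fun t ht ↦
    hu.hasDerivWithinAt_iteratedDerivWithin (mod_cast ENat.natCast_lt_top k) hS ht
  choose M hM using fun k : ℕ ↦
    hu.exists_bound_iteratedDerivWithin (mod_cast (ENat.natCast_lt_top k).le) hS isCompact_Icc
  refine Tendsto.congr (f₁ := fun N : ℕ ↦ bendingEnergy u (s N) N ((L - 0) / N))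
    (fun N ↦ by rw [bendingEnergy, sub_zero, inv_div]) ?_
  exact tendsto_bendingEnergy
    (fun t ht ↦ by simpa only [iteratedDerivWithin_zero, zero_add] using hderiv 0 t ht)
    (hderiv 1) (hderiv 2) (hM 1) (hM 2) (hM 3) hL hs0 hsN
    (fun N hN ↦ (strictMonoOn_Iic_of_lt_succ (hmono N hN)).monotoneOn)
    (fun N hN k hk ↦ by simpa using hclose N hN (k + 1) (by omega) hk)

/-- convergence of the discrete bending energy (centered second difference
quotients at almost equidistant nodes) to `∫₀^L |u''|²` for a smooth curve `u`. -/
theorem stmt17 (L C : ℝ) (hL : 0 < L) (hC : 0 < C)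
    (u : ℝ → EuclideanSpace ℝ (Fin 3))
    (hu : ContDiffOn ℝ (⊤ : ℕ∞) u (Icc 0 L))
    (s : ℕ → ℕ → ℝ)
    (hs0 : ∀ N : ℕ, 1 ≤ N → s N 0 = 0)
    (hsN : ∀ N : ℕ, 1 ≤ N → s N N = L)
    (hmono : ∀ N : ℕ, 1 ≤ N → ∀ i, i < N → s N i < s N (i + 1))
    (hclose : ∀ N : ℕ, 1 ≤ N → ∀ i, 1 ≤ i → i ≤ N →
      |s N i - s N (i - 1) - L / N| ≤ C * (L / N) ^ 3) :
    Filter.Tendsto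
      (fun N : ℕ => (L / N) * ∑ i ∈ Finset.Icc 1 (N - 1),
        ‖(((N : ℝ) / L) ^ 2) •
          (u (s N (i - 1)) - (2:ℝ) • u (s N i) + u (s N (i + 1)))‖ ^ 2)
      atTop (𝓝 (∫ σ in (0:ℝ)..L, ‖iteratedDerivWithin 2 u (Icc 0 L) σ‖ ^ 2)) :=
  stmt17_general L C hL u hu s hs0 hsN hmono hclose
end

section
/- Let L > 0, C > 0 and let θ : [0,L] → ℝ be smooth. For each N ∈ ℕ let 0 = s₀^N < s₁^N < … < s_N^N = L be nodes satisfying |s_i^N − s_{i−1}^N − L/N| ≤ C·(L/N)³ for all i = 1,…,N, and set σ_i^N := (s_{i−1}^N + s_i^N)/2 for i = 1,…,N. Then lim_{N→∞} (L/N)·Σ_{i=1}^{N−1} |(θ(σ_{i+1}^N) − θ(σ_i^N))·(N/L)|² = ∫₀^L |θ'(s)|² ds. -/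
/-!
By the mean value theorem, `θ(σ_{i+1}) - θ(σ_i) = θ'(c_i) Δ_i` with `c_i` between the two
midpoints, whose distance `Δ_i` is `L/N` up to `C (L/N)³`. So the discrete energy is the Riemann
sum `∑ θ'(c_i)² Δ_i` up to a relative error `O((L/N)²)`, and uniform continuity of `θ'²` on
`[0, L]` makes this Riemann sum close to `∫ θ'²` over `[σ_1, σ_N]`. The two end pieces left out
have length `O(L/N)`.
-/

open MeasureTheory Set Filter Topology

theorem abs_sq_sub_div_sub_integral_sq_le {θ g : ℝ → ℝ} {a b δ M ε : ℝ} (hab : a < b)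
    (hδ : 0 < δ) (hθ : ContinuousOn θ (Icc a b))
    (hderiv : ∀ x ∈ Ioo a b, HasDerivAt θ (g x) x) (hg : ContinuousOn g (Icc a b))
    (hM : ∀ x ∈ Icc a b, g x ^ 2 ≤ M)
    (hosc : ∀ x ∈ Icc a b, ∀ y ∈ Icc a b, |g x ^ 2 - g y ^ 2| ≤ ε) :
    |(θ b - θ a) ^ 2 / δ - ∫ x in a..b, g x ^ 2| ≤ (ε + M * |b - a - δ| / δ) * (b - a) := by
  obtain ⟨c, hc, hslope⟩ := exists_hasDerivAt_eq_slope θ g hab hθ hderiv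
  have hcI : c ∈ Icc a b := Ioo_subset_Icc_self hc
  have hba : 0 < b - a := sub_pos.mpr hab
  have hmvt : θ b - θ a = g c * (b - a) := by rw [hslope]; field_simp
  have hquad : |(θ b - θ a) ^ 2 / δ - g c ^ 2 * (b - a)| ≤ M * |b - a - δ| / δ * (b - a) := by
    have : (θ b - θ a) ^ 2 / δ - g c ^ 2 * (b - a) = g c ^ 2 * (b - a) * (b - a - δ) / δ := by
      rw [hmvt]; field_simp
    rw [this, abs_div, abs_mul, abs_mul, abs_of_nonneg (sq_nonneg _), abs_of_pos hba,
      abs_of_pos hδ, mul_div_assoc, mul_div_assoc]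
    have := mul_le_mul_of_nonneg_right (hM c hcI)
      (mul_nonneg (by positivity : 0 ≤ |b - a - δ| / δ) hba.le)
    linarith
  have hriemann : |g c ^ 2 * (b - a) - ∫ x in a..b, g x ^ 2| ≤ ε * (b - a) := by
    have hint : IntervalIntegrable (fun x => g x ^ 2) volume a b :=
      ((hg.pow 2).mono (uIcc_of_le hab.le).subset).intervalIntegrable
    have : g c ^ 2 * (b - a) - ∫ x in a..b, g x ^ 2 = ∫ x in a..b, (g c ^ 2 - g x ^ 2) := by
      rw [intervalIntegral.integral_sub intervalIntegrable_const hint,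
        intervalIntegral.integral_const, smul_eq_mul, mul_comm]
    rw [this, ← abs_of_pos hba, ← Real.norm_eq_abs]
    refine intervalIntegral.norm_integral_le_of_norm_le_const fun x hx => ?_
    rw [uIoc_of_le hab.le] at hx
    exact hosc c hcI x (Ioc_subset_Icc_self hx)
  calc _ ≤ |(θ b - θ a) ^ 2 / δ - g c ^ 2 * (b - a)|
        + |g c ^ 2 * (b - a) - ∫ x in a..b, g x ^ 2| := abs_sub_le _ _ _
    _ ≤ M * |b - a - δ| / δ * (b - a) + ε * (b - a) := add_le_add hquad hriemann
    _ = _ := by ring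

theorem abs_sum_sub_integral_le_of_abs_sub_integral_le {f τ : ℕ → ℝ} {h : ℝ → ℝ} {m : ℕ}
    {K : ℝ}
    (hint : ∀ k < m, IntervalIntegrable h volume (τ k) (τ (k + 1)))
    (hloc : ∀ k < m, |f k - ∫ x in τ k..τ (k + 1), h x| ≤ K * (τ (k + 1) - τ k)) :
    |∑ k ∈ Finset.range m, f k - ∫ x in τ 0..τ m, h x| ≤ K * (τ m - τ 0) := by
  rw [← intervalIntegral.sum_integral_adjacent_intervals hint, ← Finset.sum_sub_distrib,
    ← Finset.sum_range_sub τ, Finset.mul_sum]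
  exact (Finset.abs_sum_le_sum_abs _ _).trans
    (Finset.sum_le_sum fun k hk => hloc k (Finset.mem_range.mp hk))

theorem abs_integral_sub_integral_le_of_mem_Icc {h : ℝ → ℝ} {a a' b' b M : ℝ}
    (ha' : a' ∈ Icc a b) (hb' : b' ∈ Icc a b) (hh : ContinuousOn h (Icc a b))
    (hM : ∀ x ∈ Icc a b, |h x| ≤ M) :
    |(∫ x in a..b, h x) - ∫ x in a'..b', h x| ≤ M * ((a' - a) + (b - b')) := by
  have haI : a ∈ Icc a b := ⟨le_rfl, ha'.1.trans ha'.2⟩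
  have hbI : b ∈ Icc a b := ⟨ha'.1.trans ha'.2, le_rfl⟩
  have hint : ∀ x ∈ Icc a b, ∀ y ∈ Icc a b, IntervalIntegrable h volume x y := fun x hx y hy =>
    (hh.mono (uIcc_subset_Icc hx hy)).intervalIntegrable
  have hbound : ∀ x ∈ Icc a b, ∀ y ∈ Icc a b, ‖∫ t in x..y, h t‖ ≤ M * |y - x| :=
    fun x hx y hy => intervalIntegral.norm_integral_le_of_norm_le_const fun t ht =>
      hM t (uIcc_subset_Icc hx hy (uIoc_subset_uIcc ht))
  have hleft := hbound a haI a' ha'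
  have hright := hbound b hbI b' hb'
  rw [Real.norm_eq_abs, abs_of_nonneg (sub_nonneg.mpr ha'.1)] at hleft
  rw [Real.norm_eq_abs, abs_of_nonpos (sub_nonpos.mpr hb'.2)] at hright
  rw [intervalIntegral.integral_interval_sub_interval_comm (hint a haI b hbI)
    (hint a' ha' b' hb') (hint a haI a' ha')]
  calc _ ≤ |∫ t in a..a', h t| + |∫ t in b..b', h t| := abs_sub _ _
    _ ≤ _ := by linarith

/-- `nodeMidpoint s k` is the paper's `σ_{k+1}`. -/
noncomputable def nodeMidpoint (s : ℕ → ℝ) (k : ℕ) : ℝ := (s k + s (k + 1)) / 2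

section Nodes

variable {s : ℕ → ℝ} {n : ℕ} {L δ κ : ℝ}

theorem node_mem_Icc (h0 : s 0 = 0) (hn : s n = L) (hmono : ∀ i < n, s i < s (i + 1))
    {i : ℕ} (hi : i ≤ n) : s i ∈ Icc 0 L := by
  have hs := (strictMonoOn_Iic_of_lt_succ hmono).monotoneOn
  exact ⟨h0 ▸ hs (Nat.zero_le n) hi (Nat.zero_le i), hn ▸ hs hi (le_refl n) hi⟩

theorem nodeMidpoint_mem_Icc (h0 : s 0 = 0) (hn : s n = L) (hmono : ∀ i < n, s i < s (i + 1))
    {k : ℕ} (hk : k < n) : nodeMidpoint s k ∈ Icc 0 L := by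
  have h₁ := node_mem_Icc h0 hn hmono hk.le
  have h₂ := node_mem_Icc h0 hn hmono (Nat.succ_le_of_lt hk)
  constructor <;> unfold nodeMidpoint <;> linarith [h₁.1, h₁.2, h₂.1, h₂.2]

theorem nodeMidpoint_lt_succ (hmono : ∀ i < n, s i < s (i + 1)) {k : ℕ} (hk : k + 1 < n) :
    nodeMidpoint s k < nodeMidpoint s (k + 1) := by
  unfold nodeMidpoint
  linarith [hmono k (by omega), hmono (k + 1) hk]

theorem abs_nodeMidpoint_succ_sub_sub_le (hgap : ∀ i < n, |s (i + 1) - s i - δ| ≤ κ * δ)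
    {k : ℕ} (hk : k + 1 < n) : |nodeMidpoint s (k + 1) - nodeMidpoint s k - δ| ≤ κ * δ := by
  have h₁ := abs_le.mp (hgap k (by omega))
  have h₂ := abs_le.mp (hgap (k + 1) hk)
  unfold nodeMidpoint
  rw [abs_le]
  constructor <;> linarith [h₁.1, h₁.2, h₂.1, h₂.2]

theorem nodeMidpoint_zero_add_sub_nodeMidpoint_le (hn0 : 0 < n) (h0 : s 0 = 0) (hn : s n = L)
    (hgap : ∀ i < n, |s (i + 1) - s i - δ| ≤ κ * δ) :
    nodeMidpoint s 0 + (L - nodeMidpoint s (n - 1)) ≤ (1 + κ) * δ := by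
  have h₁ := (abs_le.mp (hgap 0 hn0)).2
  have h₂ := (abs_le.mp (hgap (n - 1) (by omega))).2
  rw [Nat.sub_add_cancel hn0] at h₂
  unfold nodeMidpoint
  rw [Nat.sub_add_cancel hn0]
  linarith

end Nodes

theorem abs_sum_sq_sub_div_sub_integral_nodeMidpoint_le {s : ℕ → ℝ} {n : ℕ} {L δ κ M ε : ℝ}
    {θ g : ℝ → ℝ} (hδ : 0 < δ) (h0 : s 0 = 0) (hn : s n = L)
    (hmono : ∀ i < n, s i < s (i + 1))
    (hgap : ∀ i < n, |s (i + 1) - s i - δ| ≤ κ * δ)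
    (hθ : ContinuousOn θ (Icc 0 L)) (hderiv : ∀ x ∈ Ioo 0 L, HasDerivAt θ (g x) x)
    (hg : ContinuousOn g (Icc 0 L)) (hM : ∀ x ∈ Icc 0 L, g x ^ 2 ≤ M)
    (hosc : ∀ x ∈ Icc 0 L, ∀ y ∈ Icc 0 L, |x - y| ≤ (1 + κ) * δ → |g x ^ 2 - g y ^ 2| ≤ ε) :
    |∑ k ∈ Finset.range (n - 1),
        (θ (nodeMidpoint s (k + 1)) - θ (nodeMidpoint s k)) ^ 2 / δ
      - ∫ x in nodeMidpoint s 0..nodeMidpoint s (n - 1), g x ^ 2|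
      ≤ (ε + M * κ) * (nodeMidpoint s (n - 1) - nodeMidpoint s 0) := by
  set τ := nodeMidpoint s
  have hτ : ∀ k < n, τ k ∈ Icc 0 L := fun k hk => nodeMidpoint_mem_Icc h0 hn hmono hk
  refine abs_sum_sub_integral_le_of_abs_sub_integral_le (fun k hk => ?_) (fun k hk => ?_)
  · exact ((hg.pow 2).mono (uIcc_subset_Icc (hτ k (by omega)) (hτ (k + 1) (by omega))))
      |>.intervalIntegrable
  have hτk := hτ k (by omega)
  have hτk' := hτ (k + 1) (by omega)
  have hsub : Icc (τ k) (τ (k + 1)) ⊆ Icc 0 L := Icc_subset_Icc hτk.1 hτk'.2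
  have hstep := abs_le.mp (abs_nodeMidpoint_succ_sub_sub_le hgap (k := k) (by omega))
  refine (abs_sq_sub_div_sub_integral_sq_le (nodeMidpoint_lt_succ hmono (by omega)) hδ
    (hθ.mono hsub) (fun x hx => hderiv x ⟨?_, ?_⟩) (hg.mono hsub)
    (fun x hx => hM x (hsub hx)) (fun x hx y hy => hosc x (hsub hx) y (hsub hy) ?_)).trans ?_
  · exact hτk.1.trans_lt hx.1
  · exact hx.2.trans_le hτk'.2
  · rw [abs_le]
    constructor <;> linarith [hx.1, hx.2, hy.1, hy.2, hstep.2]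
  · have hrel : |τ (k + 1) - τ k - δ| / δ ≤ κ := by
      rw [div_le_iff₀ hδ, abs_le]
      exact hstep
    have hM0 : 0 ≤ M := (sq_nonneg _).trans (hM _ hτk)
    rw [mul_div_assoc]
    gcongr
    linarith [nodeMidpoint_lt_succ hmono (k := k) (by omega)]

theorem abs_sum_sq_sub_div_sub_integral_sq_le {s : ℕ → ℝ} {n : ℕ} {L δ κ M ε : ℝ}
    {θ g : ℝ → ℝ} (hn0 : 0 < n) (hδ : 0 < δ) (h0 : s 0 = 0) (hn : s n = L)
    (hmono : ∀ i < n, s i < s (i + 1))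
    (hgap : ∀ i < n, |s (i + 1) - s i - δ| ≤ κ * δ)
    (hθ : ContinuousOn θ (Icc 0 L)) (hderiv : ∀ x ∈ Ioo 0 L, HasDerivAt θ (g x) x)
    (hg : ContinuousOn g (Icc 0 L)) (hM : ∀ x ∈ Icc 0 L, g x ^ 2 ≤ M)
    (hosc : ∀ x ∈ Icc 0 L, ∀ y ∈ Icc 0 L, |x - y| ≤ (1 + κ) * δ → |g x ^ 2 - g y ^ 2| ≤ ε) :
    |∑ k ∈ Finset.range (n - 1),
        (θ (nodeMidpoint s (k + 1)) - θ (nodeMidpoint s k)) ^ 2 / δ - ∫ x in 0..L, g x ^ 2|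
      ≤ (ε + M * κ) * L + M * ((1 + κ) * δ) := by
  set τ := nodeMidpoint s
  have hτ₀ : τ 0 ∈ Icc 0 L := nodeMidpoint_mem_Icc h0 hn hmono hn0
  have hτₗ : τ (n - 1) ∈ Icc 0 L := nodeMidpoint_mem_Icc h0 hn hmono (by omega)
  have hκ : 0 ≤ κ := (mul_nonneg_iff_of_pos_right hδ).mp ((abs_nonneg _).trans (hgap 0 hn0))
  have hM0 : 0 ≤ M := (sq_nonneg _).trans (hM _ hτ₀)
  have hε : 0 ≤ ε := (abs_nonneg _).trans (hosc _ hτ₀ _ hτ₀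
    (by rw [sub_self, abs_zero]; exact mul_nonneg (by linarith) hδ.le))
  have hinterior := abs_sum_sq_sub_div_sub_integral_nodeMidpoint_le hδ h0 hn hmono hgap hθ hderiv
    hg hM hosc
  have hends : |(∫ x in τ 0..τ (n - 1), g x ^ 2) - ∫ x in 0..L, g x ^ 2|
      ≤ M * ((τ 0 - 0) + (L - τ (n - 1))) := by
    rw [abs_sub_comm]
    exact abs_integral_sub_integral_le_of_mem_Icc hτ₀ hτₗ (hg.pow 2)
      fun x hx => (abs_of_nonneg (sq_nonneg _)).trans_le (hM x hx)
  have hendpoints := nodeMidpoint_zero_add_sub_nodeMidpoint_le hn0 h0 hn hgap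
  calc _ ≤ |∑ k ∈ Finset.range (n - 1), (θ (τ (k + 1)) - θ (τ k)) ^ 2 / δ
          - ∫ x in τ 0..τ (n - 1), g x ^ 2|
        + |(∫ x in τ 0..τ (n - 1), g x ^ 2) - ∫ x in 0..L, g x ^ 2| := abs_sub_le _ _ _
    _ ≤ (ε + M * κ) * L + M * ((1 + κ) * δ) := by
      gcongr ?_ + ?_
      · exact hinterior.trans (by gcongr; linarith [hτ₀.1, hτₗ.2])
      · exact hends.trans (by gcongr; linarith)

theorem mul_sum_Icc_abs_mul_sq_eq (θ : ℝ → ℝ) (s : ℕ → ℝ) (N : ℕ) (L : ℝ) :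
    (L / N) * ∑ i ∈ Finset.Icc 1 (N - 1),
        |(θ ((s i + s (i + 1)) / 2) - θ ((s (i - 1) + s i) / 2)) * ((N : ℝ) / L)| ^ 2
      = ∑ k ∈ Finset.range (N - 1),
          (θ (nodeMidpoint s (k + 1)) - θ (nodeMidpoint s k)) ^ 2 / (L / N) := by
  rw [Finset.mul_sum, ← Finset.Ico_add_one_right_eq_Icc, Finset.sum_Ico_eq_sum_range,
    Nat.add_sub_cancel]
  refine Finset.sum_congr rfl fun k _ => ?_
  rw [add_comm 1 k, Nat.add_sub_cancel, sq_abs, mul_pow, ← inv_div, nodeMidpoint, nodeMidpoint]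
  rcases eq_or_ne (L / N) 0 with h | h
  · simp [h]
  · field_simp

theorem stmt18_general (L C : ℝ) (hL : 0 < L)
    (θ : ℝ → ℝ)
    (hθ : ContDiffOn ℝ (⊤ : ℕ∞) θ (Icc 0 L))
    (s : ℕ → ℕ → ℝ)
    (hs0 : ∀ N : ℕ, 1 ≤ N → s N 0 = 0)
    (hsN : ∀ N : ℕ, 1 ≤ N → s N N = L)
    (hmono : ∀ N : ℕ, 1 ≤ N → ∀ i, i < N → s N i < s N (i + 1))
    (hclose : ∀ N : ℕ, 1 ≤ N → ∀ i, 1 ≤ i → i ≤ N →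
      |s N i - s N (i - 1) - L / N| ≤ C * (L / N) ^ 3) :
    Filter.Tendsto
      (fun N : ℕ => (L / N) * ∑ i ∈ Finset.Icc 1 (N - 1),
        |(θ ((s N i + s N (i + 1)) / 2) - θ ((s N (i - 1) + s N i) / 2)) * ((N : ℝ) / L)| ^ 2)
      atTop (𝓝 (∫ σ in (0:ℝ)..L, (derivWithin θ (Icc 0 L) σ) ^ 2)) := by
  set g := derivWithin θ (Icc 0 L)
  have hg : ContinuousOn g (Icc 0 L) :=
    hθ.continuousOn_derivWithin (uniqueDiffOn_Icc hL) (by simp)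
  have hderiv : ∀ x ∈ Ioo 0 L, HasDerivAt θ (g x) x := fun x hx =>
    (hθ.differentiableOn (by simp) x (Ioo_subset_Icc_self hx)).hasDerivWithinAt.hasDerivAt
      (Icc_mem_nhds hx.1 hx.2)
  obtain ⟨M, hM⟩ := isCompact_Icc.bddAbove_image (hg.pow 2)
  refine Metric.tendsto_nhds.mpr fun ε hε => ?_
  obtain ⟨d, hd, hosc⟩ := Metric.uniformContinuousOn_iff.mp
    (isCompact_Icc.uniformContinuousOn_of_continuous (hg.pow 2)) (ε / (2 * L)) (by positivity)
  have hδ : Tendsto (fun N : ℕ => L / N) atTop (𝓝 0) :=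
    tendsto_const_div_atTop_nhds_zero_nat L
  have hfine : ∀ᶠ N : ℕ in atTop, (1 + C * (L / N) ^ 2) * (L / N) < d :=
    (((by fun_prop : Continuous fun x : ℝ => (1 + C * x ^ 2) * x).tendsto' 0 0
      (by simp)).comp hδ).eventually_lt_const hd
  have hsmall : ∀ᶠ N : ℕ in atTop,
      (ε / (2 * L) + M * (C * (L / N) ^ 2)) * L + M * ((1 + C * (L / N) ^ 2) * (L / N)) < ε :=
    (((by fun_prop : Continuous fun x : ℝ =>
      (ε / (2 * L) + M * (C * x ^ 2)) * L + M * ((1 + C * x ^ 2) * x)).tendsto' 0 (ε / 2)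
      (by field_simp; ring)).comp hδ).eventually_lt_const (half_lt_self hε)
  filter_upwards [hfine, hsmall, eventually_ge_atTop 1] with N hfine hsmall hN1
  rw [Real.dist_eq, mul_sum_Icc_abs_mul_sq_eq]
  refine lt_of_le_of_lt (abs_sum_sq_sub_div_sub_integral_sq_le hN1
    (div_pos hL (by exact_mod_cast hN1)) (hs0 N hN1) (hsN N hN1) (hmono N hN1) (fun i hi => ?_)
    hθ.continuousOn hderiv hg (fun x hx => hM (mem_image_of_mem _ hx))
    (fun x hx y hy hxy => (hosc x hx y hy (hxy.trans_lt hfine)).le)) hsmall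
  simpa only [Nat.add_sub_cancel] using
    (hclose N hN1 (i + 1) (by omega) (by omega)).trans_eq (by ring)

/-- convergence of the discrete torsional energy (first difference quotients
at midpoints of consecutive almost equidistant nodes) to `∫₀^L |θ'|²` for smooth `θ`. -/
theorem stmt18 (L C : ℝ) (hL : 0 < L) (hC : 0 < C)
    (θ : ℝ → ℝ)
    (hθ : ContDiffOn ℝ (⊤ : ℕ∞) θ (Icc 0 L))
    (s : ℕ → ℕ → ℝ)
    (hs0 : ∀ N : ℕ, 1 ≤ N → s N 0 = 0)
    (hsN : ∀ N : ℕ, 1 ≤ N → s N N = L)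
    (hmono : ∀ N : ℕ, 1 ≤ N → ∀ i, i < N → s N i < s N (i + 1))
    (hclose : ∀ N : ℕ, 1 ≤ N → ∀ i, 1 ≤ i → i ≤ N →
      |s N i - s N (i - 1) - L / N| ≤ C * (L / N) ^ 3) :
    Filter.Tendsto
      (fun N : ℕ => (L / N) * ∑ i ∈ Finset.Icc 1 (N - 1),
        |(θ ((s N i + s N (i + 1)) / 2) - θ ((s N (i - 1) + s N i) / 2)) * ((N : ℝ) / L)| ^ 2)
      atTop (𝓝 (∫ σ in (0:ℝ)..L, (derivWithin θ (Icc 0 L) σ) ^ 2)) :=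
  stmt18_general L C hL θ hθ s hs0 hsN hmono hclose
end
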